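/- arXiv:1208.0629 — 9 statements merged into one kernel-verified Lean document; each statement's English description precedes it below -/
import Mathlib

section
/- Let U ⊆ ℝ^N be open and P̃ : U → (ℝ^N →L[ℝ] ℝ^N) differentiable at x ∈ U such that for every y ∈ U the operator P̃(y) is an orthogonal projection (self-adjoint and idempotent). Then ∑_{i=1}^N P̃(x) ((fderiv ℝ P̃ x (P̃(x) e_i)) e_i) = 0, where (e_1,…,e_N) is the standard orthonormal basis of ℝ^N. -/
/-!
Differentiating `P² = P` at `x` gives `P·D·P = 0` and differentiating `P* = P` makes every
`D = dP(v)` symmetric. With `Q = 1 - P` and `w` arbitrary, these turn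
`⟪∑ᵢ P (dP(P eᵢ) eᵢ), w⟫` into `∑ᵢ ⟪Q eᵢ, N eᵢ⟫ = tr (Q N)` for `N b = dP(P b)(P w)`.
Since `N Q = 0`, the trace vanishes by `tr (Q N) = tr (N Q)`.
-/

open scoped InnerProductSpace
open Topology

theorem IsIdempotentElem.mul_mul_eq_zero_of_mul_add_mul_eq {R : Type*} [NonUnitalRing R]
    {p d : R} (hp : IsIdempotentElem p) (h : p * d + d * p = d) : p * d * p = 0 := by
  have := congrArg (p * ·) h
  simp only [mul_add, ← mul_assoc, hp.eq] at this
  simpa using this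

theorem OrthonormalBasis.sum_inner_apply_eq_zero_of_comp_eq_zero {𝕜 E ι : Type*} [RCLike 𝕜]
    [NormedAddCommGroup E] [InnerProductSpace 𝕜 E] [Fintype ι] (b : OrthonormalBasis ι 𝕜 E)
    {q n : E →ₗ[𝕜] E} (hq : q.IsSymmetric) (hnq : n ∘ₗ q = 0) :
    ∑ i, ⟪q (b i), n (b i)⟫_𝕜 = 0 := by
  have : Module.Finite 𝕜 E := .of_basis b.toBasis
  calc ∑ i, ⟪q (b i), n (b i)⟫_𝕜 = LinearMap.trace 𝕜 E (q ∘ₗ n) := by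
        simp only [LinearMap.trace_eq_sum_inner _ b, hq _ _, LinearMap.comp_apply]
    _ = 0 := by rw [LinearMap.trace_comp_comm', hnq, map_zero]

theorem OrthonormalBasis.sum_proj_apply_proj_apply_eq_zero {𝕜 E ι : Type*} [RCLike 𝕜]
    [NormedAddCommGroup E] [InnerProductSpace 𝕜 E] [Fintype ι] (b : OrthonormalBasis ι 𝕜 E)
    {p : E →L[𝕜] E} (hp : IsIdempotentElem p) (hps : (p : E →ₗ[𝕜] E).IsSymmetric)
    {D : E →L[𝕜] E →L[𝕜] E} (hD : ∀ v, (D v : E →ₗ[𝕜] E).IsSymmetric)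
    (hpDp : ∀ v, p * D v * p = 0) :
    ∑ i, p (D (p (b i)) (b i)) = 0 := by
  refine ext_inner_right 𝕜 fun w ↦ ?_
  let q : E →L[𝕜] E := 1 - p
  let n : E →L[𝕜] E := (D.comp p).flip (p w)
  have hq : (q : E →ₗ[𝕜] E).IsSymmetric := fun a c ↦ by
    simpa [q, inner_sub_left, inner_sub_right] using hps a c
  have hnq : (n : E →ₗ[𝕜] E) ∘ₗ (q : E →ₗ[𝕜] E) = 0 := by
    have hpp : ∀ a, p (p a) = p a := fun a ↦ by rw [← mul_apply_eq_comp, hp.eq]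
    ext a
    simp [n, q, hpp]
  have hterm : ∀ a, ⟪p (D (p a) a), w⟫_𝕜 = ⟪q a, n a⟫_𝕜 := fun a ↦ by
    have hpDpa : p (D (p a) (p a)) = 0 := DFunLike.congr_fun (hpDp (p a)) a
    calc ⟪p (D (p a) a), w⟫_𝕜 = ⟪p (D (p a) (q a)), w⟫_𝕜 := by simp [q, hpDpa]
      _ = ⟪q a, n a⟫_𝕜 := (hps _ w).trans (hD _ _ _)
  simp only [sum_inner, hterm, inner_zero_left]
  exact b.sum_inner_apply_eq_zero_of_comp_eq_zero hq hnq

section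

variable {F E : Type*} [NormedAddCommGroup F] [NormedSpace ℝ F]
  [NormedAddCommGroup E] [InnerProductSpace ℝ E] {P : F → E →L[ℝ] E} {x : F}

theorem fderiv_mul_add_mul_eq_of_eventually_isIdempotentElem (hP : DifferentiableAt ℝ P x)
    (h : ∀ᶠ y in 𝓝 x, IsIdempotentElem (P y)) (v : F) :
    P x * fderiv ℝ P x v + fderiv ℝ P x v * P x = fderiv ℝ P x v := by
  have hsq : (fun y ↦ (P y).comp (P y)) =ᶠ[𝓝 x] P := h.mono fun y hy ↦ hy.eq
  have := DFunLike.congr_fun (fderiv_clm_comp hP hP) v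
  rw [hsq.fderiv_eq] at this
  exact this.symm

theorem isSymmetric_fderiv_of_eventually_isSymmetric (hP : DifferentiableAt ℝ P x)
    (h : ∀ᶠ y in 𝓝 x, (P y : E →ₗ[ℝ] E).IsSymmetric) (v : F) :
    (fderiv ℝ P x v : E →ₗ[ℝ] E).IsSymmetric := by
  intro a b
  have hPa : HasFDerivAt (fun y ↦ P y a) ((fderiv ℝ P x).flip a) x := by
    simpa using hP.hasFDerivAt.clm_apply (hasFDerivAt_const a x)
  have hPb : HasFDerivAt (fun y ↦ P y b) ((fderiv ℝ P x).flip b) x := by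
    simpa using hP.hasFDerivAt.clm_apply (hasFDerivAt_const b x)
  have hsym : (fun y : F ↦ ⟪P y a, b⟫_ℝ) =ᶠ[𝓝 x] fun y : F ↦ ⟪a, P y b⟫_ℝ :=
    h.mono fun y hy ↦ hy a b
  have := DFunLike.congr_fun (hsym.fderiv_eq (𝕜 := ℝ)) v
  simpa [fderiv_inner_apply, hPa.differentiableAt, hPb.differentiableAt, hPa.fderiv,
    hPb.fderiv] using this

end

/-- Embedded form of `∑ᵢ ∇^E_{Xᵢ} Xᵢ = 0` from the proof of Lemma 2.2(c): for a family
`Pt` (playing the role of `P̃`) of orthogonal projections on an open set `U`,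
differentiable at `x ∈ U`, one has `∑ i, Pt x ((fderiv ℝ Pt x (Pt x eᵢ)) eᵢ) = 0`. -/
theorem sum_proj_fderiv_proj_single_eq_zero {N : ℕ}
    (U : Set (EuclideanSpace ℝ (Fin N))) (hU : IsOpen U)
    (Pt : EuclideanSpace ℝ (Fin N) → (EuclideanSpace ℝ (Fin N) →L[ℝ] EuclideanSpace ℝ (Fin N)))
    (x : EuclideanSpace ℝ (Fin N)) (hx : x ∈ U)
    (hdiff : DifferentiableAt ℝ Pt x)
    (hsa : ∀ y ∈ U, ∀ v w : EuclideanSpace ℝ (Fin N), ⟪Pt y v, w⟫_ℝ = ⟪v, Pt y w⟫_ℝ)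
    (hidem : ∀ y ∈ U, ∀ v : EuclideanSpace ℝ (Fin N), Pt y (Pt y v) = Pt y v) :
    ∑ i : Fin N,
        Pt x ((fderiv ℝ Pt x (Pt x (EuclideanSpace.single i (1 : ℝ))))
          (EuclideanSpace.single i (1 : ℝ)))
      = 0 := by
  have hU' : ∀ᶠ y in 𝓝 x, y ∈ U := hU.mem_nhds hx
  have hidem' : ∀ᶠ y in 𝓝 x, IsIdempotentElem (Pt y) :=
    hU'.mono fun y hy ↦ ContinuousLinearMap.ext (hidem y hy)
  have hsa' : ∀ᶠ y in 𝓝 x, (Pt y : EuclideanSpace ℝ (Fin N) →ₗ[ℝ] _).IsSymmetric :=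
    hU'.mono hsa
  have hPDP : ∀ v, Pt x * fderiv ℝ Pt x v * Pt x = 0 := fun v ↦
    hidem'.self_of_nhds.mul_mul_eq_zero_of_mul_add_mul_eq
      (fderiv_mul_add_mul_eq_of_eventually_isIdempotentElem hdiff hidem' v)
  simpa using (EuclideanSpace.basisFun (Fin N) ℝ).sum_proj_apply_proj_apply_eq_zero
    hidem'.self_of_nhds hsa'.self_of_nhds
    (isSymmetric_fderiv_of_eventually_isSymmetric hdiff hsa') hPDP
end

section
/- Let U ⊆ ℝ^N be open, P̃ : U → (ℝ^N →L[ℝ] ℝ^N) continuously differentiable with each P̃(y) an orthogonal projection, and let f : U → ℝ be twice continuously differentiable. Define X_i f : U → ℝ by (X_i f)(y) := (fderiv ℝ f y)(P̃(y) e_i), and the leafwise Laplacian Δ_E f(x) := ∑_{j=1}^N ⟨(fderiv ℝ (y ↦ P̃(y)(gradient f y)) x)(P̃(x) e_j), P̃(x) e_j⟩ (the leafwise divergence of the leafwise gradient field y ↦ P̃(y)(gradient f y)). Then for every x ∈ U, Δ_E f(x) = ∑_{i=1}^N (fderiv ℝ (X_i f) x)(P̃(x) e_i), i.e. Δ_E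 f = ∑_i X_i(X_i f). -/
/-!
Write `A` for the derivative at `x` of the leafwise gradient field `y ↦ P̃(y) ∇f(y)` and
`P = P̃(x)`. Near `x`, self-adjointness gives `Xᵢ f = ⟪P̃ ∇f, eᵢ⟫`, so `Xᵢ(Xᵢ f)(x) = ⟪A P eᵢ, eᵢ⟫`
and the right-hand side is `tr (A P)`. The left-hand side is `∑ ⟪P A P eⱼ, eⱼ⟫ = tr (P A P)`,
which equals `tr (A P P) = tr (A P)` by cyclicity of the trace and `P² = P`.
-/

open scoped InnerProductSpace
open Filter Topology

namespace LinearMap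

variable {𝕜 E ι : Type*} [RCLike 𝕜] [Fintype ι] [NormedAddCommGroup E] [InnerProductSpace 𝕜 E]

theorem IsSymmetric.sum_inner_apply_comp_of_idempotent {P : E →ₗ[𝕜] E} (hP : P.IsSymmetric)
    (hPP : P ∘ₗ P = P) (A : E →ₗ[𝕜] E) (b : OrthonormalBasis ι 𝕜 E) :
    ∑ i, ⟪P (b i), A (P (b i))⟫_𝕜 = ∑ i, ⟪b i, A (P (b i))⟫_𝕜 := by
  have : FiniteDimensional 𝕜 E := .of_basis b.toBasis
  calc ∑ i, ⟪P (b i), A (P (b i))⟫_𝕜 = ∑ i, ⟪b i, (P ∘ₗ A ∘ₗ P) (b i)⟫_𝕜 :=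
        Fintype.sum_congr _ _ fun i => hP _ _
    _ = trace 𝕜 E ((A ∘ₗ P) ∘ₗ P) := by rw [← trace_comp_comm', trace_eq_sum_inner _ b]
    _ = ∑ i, ⟪b i, A (P (b i))⟫_𝕜 := by rw [comp_assoc, hPP, trace_eq_sum_inner _ b]; rfl

end LinearMap

variable {E : Type*} [NormedAddCommGroup E] [InnerProductSpace ℝ E] [CompleteSpace E]

theorem ContDiffOn.differentiableAt_gradient {U : Set E} (hU : IsOpen U) {f : E → ℝ}
    (hf : ContDiffOn ℝ 2 f U) {x : E} (hx : x ∈ U) : DifferentiableAt ℝ (gradient f) x := by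
  have hf' : ContDiffOn ℝ 1 (fderiv ℝ f) U := hf.fderiv_of_isOpen hU (by norm_num)
  exact (InnerProductSpace.toDual ℝ E).symm.differentiableAt.comp x
    ((hf'.differentiableOn one_ne_zero).differentiableAt (hU.mem_nhds hx))

theorem fderiv_fderiv_apply_symmetric {P : E → E →L[ℝ] E} {f : E → ℝ} {x : E}
    (hsym : ∀ᶠ y in 𝓝 x, (P y : E →ₗ[ℝ] E).IsSymmetric)
    (hF : DifferentiableAt ℝ (fun y => P y (gradient f y)) x) (v h : E) :
    fderiv ℝ (fun y => fderiv ℝ f y (P y v)) x h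
      = ⟪fderiv ℝ (fun y => P y (gradient f y)) x h, v⟫_ℝ := by
  have hev : (fun y => fderiv ℝ f y (P y v)) =ᶠ[𝓝 x] fun y => ⟪P y (gradient f y), v⟫_ℝ := by
    filter_upwards [hsym] with y hy
    rw [← inner_gradient_left]
    exact (hy _ _).symm
  rw [hev.fderiv_eq, fderiv_inner_apply ℝ hF (differentiableAt_const v)]
  simp

theorem sum_inner_fderiv_proj_gradient_eq_sum_fderiv_fderiv_proj {ι : Type*} [Fintype ι]
    (b : OrthonormalBasis ι ℝ E) {P : E → E →L[ℝ] E} {f : E → ℝ} {x : E}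
    (hsym : ∀ᶠ y in 𝓝 x, (P y : E →ₗ[ℝ] E).IsSymmetric) (hidem : ∀ v, P x (P x v) = P x v)
    (hF : DifferentiableAt ℝ (fun y => P y (gradient f y)) x) :
    ∑ j, ⟪fderiv ℝ (fun y => P y (gradient f y)) x (P x (b j)), P x (b j)⟫_ℝ
      = ∑ i, fderiv ℝ (fun y => fderiv ℝ f y (P y (b i))) x (P x (b i)) := by
  set A := fderiv ℝ (fun y => P y (gradient f y)) x
  calc ∑ j, ⟪A (P x (b j)), P x (b j)⟫_ℝ = ∑ j, ⟪P x (b j), A (P x (b j))⟫_ℝ :=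
        Fintype.sum_congr _ _ fun j => real_inner_comm _ _
    _ = ∑ i, ⟪b i, A (P x (b i))⟫_ℝ :=
        hsym.self_of_nhds.sum_inner_apply_comp_of_idempotent (LinearMap.ext hidem) A b
    _ = ∑ i, fderiv ℝ (fun y => fderiv ℝ f y (P y (b i))) x (P x (b i)) :=
        Fintype.sum_congr _ _ fun i => by
          rw [fderiv_fderiv_apply_symmetric hsym hF, real_inner_comm]

/-- Embedded form of Lemma 2.2(c): the leafwise Laplacian (the leafwise divergence of the
leafwise gradient field `y ↦ Pt y (gradient f y)`) equals the sum of squares of the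
projected gradient vector fields `Xᵢ(y) = Pt y eᵢ`, i.e. `Δ_E f = ∑ i Xᵢ(Xᵢ f)`.
Here `Pt` plays the role of `P̃`, a C¹ family of orthogonal projections on the open set
`U`, and `f` is C² on `U`. -/
theorem leafwise_laplacian_eq_sum_squares {N : ℕ}
    (U : Set (EuclideanSpace ℝ (Fin N))) (hU : IsOpen U)
    (Pt : EuclideanSpace ℝ (Fin N) → (EuclideanSpace ℝ (Fin N) →L[ℝ] EuclideanSpace ℝ (Fin N)))
    (hP : ContDiffOn ℝ 1 Pt U)
    (hsa : ∀ y ∈ U, ∀ v w : EuclideanSpace ℝ (Fin N), ⟪Pt y v, w⟫_ℝ = ⟪v, Pt y w⟫_ℝ)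
    (hidem : ∀ y ∈ U, ∀ v : EuclideanSpace ℝ (Fin N), Pt y (Pt y v) = Pt y v)
    (f : EuclideanSpace ℝ (Fin N) → ℝ) (hf : ContDiffOn ℝ 2 f U)
    (x : EuclideanSpace ℝ (Fin N)) (hx : x ∈ U) :
    ∑ j : Fin N,
        ⟪(fderiv ℝ (fun y => Pt y (gradient f y)) x) (Pt x (EuclideanSpace.single j (1 : ℝ))),
          Pt x (EuclideanSpace.single j (1 : ℝ))⟫_ℝ
      = ∑ i : Fin N,
          (fderiv ℝ (fun y => fderiv ℝ f y (Pt y (EuclideanSpace.single i (1 : ℝ)))) x)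
            (Pt x (EuclideanSpace.single i (1 : ℝ))) := by
  have hUx : U ∈ 𝓝 x := hU.mem_nhds hx
  have hsym : ∀ᶠ y in 𝓝 x, (Pt y : EuclideanSpace ℝ (Fin N) →ₗ[ℝ] _).IsSymmetric := by
    filter_upwards [hUx] with y hy using hsa y hy
  have hF : DifferentiableAt ℝ (fun y => Pt y (gradient f y)) x :=
    ((hP.differentiableOn one_ne_zero).differentiableAt hUx).clm_apply
      (hf.differentiableAt_gradient hU hx)
  simpa only [EuclideanSpace.basisFun_apply] using
    sum_inner_fderiv_proj_gradient_eq_sum_fderiv_fderiv_proj (EuclideanSpace.basisFun (Fin N) ℝ)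
      hsym (hidem x hx) hF
end

section
/- Let U ⊆ ℝ^N be open and P̃ : U → (ℝ^N →L[ℝ] ℝ^N) differentiable at x ∈ U with each P̃(y) an orthogonal projection. Define the mean curvature vector H(x) := −∑_{j=1}^N (fderiv ℝ P̃ x (P̃(x) e_j))(P̃(x) e_j). Then: (i) P̃(x) H(x) = 0 (the mean curvature is normal to the leaf), and (ii) for every v ∈ ℝ^N, the leafwise divergence of the field y ↦ P̃(y) v satisfies ∑_{j=1}^N ⟨(fderiv ℝ (y ↦ P̃(y) v) x)(P̃(x) e_j), P̃(x) e_j⟩ = −⟨H(x), v⟩. -/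
/-!
Differentiating `P y ∘ P y = P y` at `x` gives `P' w ∘ P + P ∘ P' w = P' w`, so `P (P' w (P v)) = 0`:
each summand of `H` is normal to the leaf. Differentiating the symmetry of `P y` shows that every
`P' w` is symmetric, hence `⟪P' (P eⱼ) v, P eⱼ⟫ = ⟪v, P' (P eⱼ) (P eⱼ)⟫`, and summing over `j`
gives `-⟪H, v⟫`.
-/

open scoped InnerProductSpace Topology

section ProjectionFamily

variable {𝕜 E F : Type*} [NontriviallyNormedField 𝕜] [NormedAddCommGroup E] [NormedSpace 𝕜 E]
  [NormedAddCommGroup F] [NormedSpace 𝕜 F] {P : E → F →L[𝕜] F} {x : E}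

theorem fderiv_clm_apply_const_apply (hP : DifferentiableAt 𝕜 P x) (v : F) (w : E) :
    fderiv 𝕜 (fun y => P y v) x w = fderiv 𝕜 P x w v := by
  simp [fderiv_clm_apply hP (differentiableAt_const v)]

theorem fderiv_mul_add_mul_fderiv_of_isIdempotentElem (hP : DifferentiableAt 𝕜 P x)
    (hidem : ∀ᶠ y in 𝓝 x, IsIdempotentElem (P y)) (w : E) :
    fderiv 𝕜 P x w * P x + P x * fderiv 𝕜 P x w = fderiv 𝕜 P x w := by
  have hsq : (P * P) =ᶠ[𝓝 x] P := hidem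
  have := congrArg (· w) (fderiv_mul' hP hP)
  simp only [hsq.fderiv_eq] at this
  simpa [add_comm] using this.symm

theorem apply_fderiv_apply_apply_eq_zero_of_isIdempotentElem (hP : DifferentiableAt 𝕜 P x)
    (hidem : ∀ᶠ y in 𝓝 x, IsIdempotentElem (P y)) (w : E) (v : F) :
    P x (fderiv 𝕜 P x w (P x v)) = 0 := by
  have hPx : P x (P x v) = P x v := congrArg (· v) hidem.self_of_nhds
  have := congrArg (· (P x v)) (fderiv_mul_add_mul_fderiv_of_isIdempotentElem hP hidem w)
  simpa [hPx] using this

end ProjectionFamily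

theorem isSymmetric_fderiv_apply_of_isSymmetric {E F : Type*} [NormedAddCommGroup E]
    [NormedSpace ℝ E] [NormedAddCommGroup F] [InnerProductSpace ℝ F] {P : E → F →L[ℝ] F} {x : E}
    (hP : DifferentiableAt ℝ P x) (hsym : ∀ᶠ y in 𝓝 x, (P y : F →ₗ[ℝ] F).IsSymmetric) (w : E) :
    (fderiv ℝ P x w : F →ₗ[ℝ] F).IsSymmetric := by
  intro u v
  have heq : (fun y => ⟪P y u, v⟫_ℝ) =ᶠ[𝓝 x] fun y => ⟪u, P y v⟫_ℝ := hsym.mono fun y h => h u v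
  have := congrArg (· w) (heq.fderiv_eq (𝕜 := ℝ))
  rw [fderiv_inner_apply ℝ (hP.clm_apply (differentiableAt_const u)) (differentiableAt_const v),
    fderiv_inner_apply ℝ (differentiableAt_const u) (hP.clm_apply (differentiableAt_const v))] at this
  simpa [fderiv_clm_apply_const_apply hP] using this

/-- Embedded form of Lemma 3.1: with the mean curvature vector
`H x = −∑ j (fderiv ℝ Pt x (Pt x eⱼ))(Pt x eⱼ)` of the leaves of a family `Pt`
(playing the role of `P̃`) of orthogonal projections, one has
(i) `Pt x (H x) = 0`, and (ii) for every `v`, the leafwise divergence of `y ↦ Pt y v`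
equals `−⟪H x, v⟫`. -/
theorem mean_curvature_normal_and_div_proj {N : ℕ}
    (U : Set (EuclideanSpace ℝ (Fin N))) (hU : IsOpen U)
    (Pt : EuclideanSpace ℝ (Fin N) → (EuclideanSpace ℝ (Fin N) →L[ℝ] EuclideanSpace ℝ (Fin N)))
    (x : EuclideanSpace ℝ (Fin N)) (hx : x ∈ U)
    (hdiff : DifferentiableAt ℝ Pt x)
    (hsa : ∀ y ∈ U, ∀ v w : EuclideanSpace ℝ (Fin N), ⟪Pt y v, w⟫_ℝ = ⟪v, Pt y w⟫_ℝ)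
    (hidem : ∀ y ∈ U, ∀ v : EuclideanSpace ℝ (Fin N), Pt y (Pt y v) = Pt y v)
    (H : EuclideanSpace ℝ (Fin N))
    (hH : H = -∑ j : Fin N, (fderiv ℝ Pt x (Pt x (EuclideanSpace.single j (1 : ℝ))))
        (Pt x (EuclideanSpace.single j (1 : ℝ)))) :
    Pt x H = 0 ∧
      ∀ v : EuclideanSpace ℝ (Fin N),
        ∑ j : Fin N, ⟪(fderiv ℝ (fun y => Pt y v) x) (Pt x (EuclideanSpace.single j (1 : ℝ))),
            Pt x (EuclideanSpace.single j (1 : ℝ))⟫_ℝ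
          = -⟪H, v⟫_ℝ := by
  let e : Fin N → EuclideanSpace ℝ (Fin N) := fun j => Pt x (EuclideanSpace.single j 1)
  have hidem_nhds : ∀ᶠ y in 𝓝 x, IsIdempotentElem (Pt y) := by
    filter_upwards [hU.mem_nhds hx] with y hy using ContinuousLinearMap.ext (hidem y hy)
  have hsym_nhds :
      ∀ᶠ y in 𝓝 x, (Pt y : EuclideanSpace ℝ (Fin N) →ₗ[ℝ] EuclideanSpace ℝ (Fin N)).IsSymmetric := by
    filter_upwards [hU.mem_nhds hx] with y hy using hsa y hy
  refine ⟨?_, fun v => ?_⟩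
  · simp only [hH, map_neg, map_sum,
      apply_fderiv_apply_apply_eq_zero_of_isIdempotentElem hdiff hidem_nhds,
      Finset.sum_const_zero, neg_zero]
  · calc ∑ j, ⟪fderiv ℝ (fun y => Pt y v) x (e j), e j⟫_ℝ
        = ∑ j, ⟪v, fderiv ℝ Pt x (e j) (e j)⟫_ℝ := by
          refine Finset.sum_congr rfl fun j _ => ?_
          rw [fderiv_clm_apply_const_apply hdiff]
          exact isSymmetric_fderiv_apply_of_isSymmetric hdiff hsym_nhds _ v (e j)
      _ = -⟪H, v⟫_ℝ := by rw [hH, inner_neg_left, neg_neg, real_inner_comm, inner_sum]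
end

section
/- Let U ⊆ ℝ^N be open and P̃ : U → (ℝ^N →L[ℝ] ℝ^N) differentiable at x ∈ U with each P̃(y) an orthogonal projection. Let X_i(y) := P̃(y) e_i and div_E X_i(x) := ∑_{j=1}^N ⟨(fderiv ℝ X_i x)(P̃(x) e_j), P̃(x) e_j⟩. Then ∑_{i=1}^N (div_E X_i(x)) • X_i(x) = 0. -/
/-!
Differentiating `P̃² = P̃` at `x` shows that every directional derivative `A` of `P̃` satisfies
`A P + P A = A` with `P = P̃ x`, hence `P A P = 0` and, `P` being self-adjoint, `P A* P = 0`.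
With `A_j` the derivative in the direction `P e_j` one has `div_E X_i(x) = ⟪e_i, w⟫` for
`w = ∑_j A_j* (P e_j)`, so the sum equals `P w = ∑_j (P A_j* P) e_j = 0`.
-/

open scoped InnerProductSpace
open Filter Topology

theorem IsIdempotentElem.mul_mul_eq_zero_of_mul_add_mul_eq_self {R : Type*} [NonUnitalRing R]
    {p a : R} (hp : IsIdempotentElem p) (h : a * p + p * a = a) : p * a * p = 0 := by
  rw [eq_sub_of_add_eq' h, sub_mul, mul_assoc, hp.eq, sub_self]

theorem mul_star_mul_eq_zero_of_isIdempotentElem {R : Type*} [NonUnitalRing R] [StarRing R]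
    {p a : R} (hp : IsIdempotentElem p) (hsa : IsSelfAdjoint p) (h : a * p + p * a = a) :
    p * star a * p = 0 := by
  simpa [star_mul, hsa.star_eq, mul_assoc] using
    congrArg star (hp.mul_mul_eq_zero_of_mul_add_mul_eq_self h)

theorem fderiv_mul_add_mul_fderiv_of_eventually_isIdempotentElem {𝕜 E 𝔸 : Type*}
    [NontriviallyNormedField 𝕜] [NormedAddCommGroup E] [NormedSpace 𝕜 E] [NormedRing 𝔸]
    [NormedAlgebra 𝕜 𝔸] {p : E → 𝔸} {x : E} (hp : DifferentiableAt 𝕜 p x)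
    (hidem : ∀ᶠ y in 𝓝 x, IsIdempotentElem (p y)) (u : E) :
    fderiv 𝕜 p x u * p x + p x * fderiv 𝕜 p x u = fderiv 𝕜 p x u := by
  have hsq := hp.hasFDerivAt.mul' hp.hasFDerivAt
  have hsq_eq : p * p =ᶠ[𝓝 x] p := hidem.mono fun y hy => hy.eq
  simpa [add_comm] using
    DFunLike.congr_fun ((hsq.congr_of_eventuallyEq hsq_eq.symm).unique hp.hasFDerivAt) u

theorem OrthonormalBasis.sum_inner_apply_smul {ι 𝕜 E : Type*} [RCLike 𝕜] [NormedAddCommGroup E]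
    [InnerProductSpace 𝕜 E] [Fintype ι] [CompleteSpace E] (b : OrthonormalBasis ι 𝕜 E)
    (T : E →L[𝕜] E) (v : E) :
    ∑ i, ⟪T (b i), v⟫_𝕜 • b i = ContinuousLinearMap.adjoint T v := by
  simp_rw [← ContinuousLinearMap.adjoint_inner_right, b.sum_repr']

theorem sum_sum_inner_smul_eq_zero_of_isIdempotentElem {ι 𝕜 E : Type*} [RCLike 𝕜]
    [NormedAddCommGroup E] [InnerProductSpace 𝕜 E] [Fintype ι] [CompleteSpace E]
    (b : OrthonormalBasis ι 𝕜 E) {P : E →L[𝕜] E} (hP : IsIdempotentElem P)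
    (hPsa : IsSelfAdjoint P) (A : ι → E →L[𝕜] E) (hA : ∀ j, A j * P + P * A j = A j) :
    ∑ i, (∑ j, ⟪A j (b i), P (b j)⟫_𝕜) • P (b i) = 0 := by
  calc ∑ i, (∑ j, ⟪A j (b i), P (b j)⟫_𝕜) • P (b i)
      = P (∑ j, ∑ i, ⟪A j (b i), P (b j)⟫_𝕜 • b i) := by
        simp only [Finset.sum_smul, map_sum, map_smul]
        exact Finset.sum_comm
    _ = ∑ j, (P * star (A j) * P) (b j) := by
        simp [b.sum_inner_apply_smul, ContinuousLinearMap.star_eq_adjoint]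
    _ = 0 := by simp [mul_star_mul_eq_zero_of_isIdempotentElem hP hPsa (hA _)]

/-- Formula (2) of Corollary 3.2: `∑ i div_E(Xᵢ) Xᵢ = 0` for the projected gradient
fields `Xᵢ(y) = Pt y eᵢ` of a family `Pt` (playing the role of `P̃`) of orthogonal
projections, where `div_E Xᵢ (x) = ∑ j ⟪(fderiv ℝ Xᵢ x)(Pt x eⱼ), Pt x eⱼ⟫`. -/
theorem sum_divE_smul_X_eq_zero {N : ℕ}
    (U : Set (EuclideanSpace ℝ (Fin N))) (hU : IsOpen U)
    (Pt : EuclideanSpace ℝ (Fin N) → (EuclideanSpace ℝ (Fin N) →L[ℝ] EuclideanSpace ℝ (Fin N)))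
    (x : EuclideanSpace ℝ (Fin N)) (hx : x ∈ U)
    (hdiff : DifferentiableAt ℝ Pt x)
    (hsa : ∀ y ∈ U, ∀ v w : EuclideanSpace ℝ (Fin N), ⟪Pt y v, w⟫_ℝ = ⟪v, Pt y w⟫_ℝ)
    (hidem : ∀ y ∈ U, ∀ v : EuclideanSpace ℝ (Fin N), Pt y (Pt y v) = Pt y v) :
    ∑ i : Fin N,
        (∑ j : Fin N,
          ⟪(fderiv ℝ (fun y => Pt y (EuclideanSpace.single i (1 : ℝ))) x)
              (Pt x (EuclideanSpace.single j (1 : ℝ))),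
            Pt x (EuclideanSpace.single j (1 : ℝ))⟫_ℝ)
          • Pt x (EuclideanSpace.single i (1 : ℝ))
      = 0 := by
  have hPt_idem : ∀ᶠ y in 𝓝 x, IsIdempotentElem (Pt y) :=
    eventually_of_mem (hU.mem_nhds hx) fun y hy => ContinuousLinearMap.ext (hidem y hy)
  have hPx_sa : IsSelfAdjoint (Pt x) :=
    ContinuousLinearMap.isSelfAdjoint_iff_isSymmetric.mpr (hsa x hx)
  have hfderiv_apply (v : EuclideanSpace ℝ (Fin N)) :
      fderiv ℝ (fun y => Pt y v) x = (fderiv ℝ Pt x).flip v := by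
    simpa using fderiv_clm_apply hdiff (differentiableAt_const v)
  simp only [hfderiv_apply, ContinuousLinearMap.flip_apply, ← EuclideanSpace.basisFun_apply]
  exact sum_sum_inner_smul_eq_zero_of_isIdempotentElem _ hPt_idem.self_of_nhds hPx_sa _
    fun _ => fderiv_mul_add_mul_fderiv_of_eventually_isIdempotentElem hdiff hPt_idem _
end

section
/- Let U ⊆ ℝ^N be open and P̃ : U → (ℝ^N →L[ℝ] ℝ^N) twice continuously differentiable with each P̃(y) an orthogonal projection. Let X_i(y) := P̃(y) e_i, let f_i : U → ℝ be the function f_i(y) := ∑_{j=1}^N ⟨(fderiv ℝ X_i y)(P̃(y) e_j), P̃(y) e_j⟩ (the leafwise divergence of X_i), and let H(x) := −∑_{j=1}^N (fderiv ℝ P̃ x (P̃(x) e_j))(P̃(x) e_j) be the mean curvature vector. Then for every x ∈ U, ‖H(x)‖² = −∑_{i=1}^N (fderiv ℝ f_i x)(X_i(x)). -/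
/-!
Differentiating `P² = P` and `⟪P v, w⟫ = ⟪v, P w⟫` shows that every derivative `D u = dP(u)` is
symmetric with `D u = P ∘ D u + D u ∘ P`; hence `P ∘ D u ∘ P = 0`, `H` is normal (`P H = 0`) and
`div_E (P eᵢ) = -⟪eᵢ, H⟫`. So `-∑ Xᵢ(div_E Xᵢ) = tr (dH ∘ P) = tr (P ∘ dH)`, and differentiating
`P H = 0` rewrites this as `-∑ ⟪D eᵢ eᵢ, H⟫`. Against the normal vector `H` the second slot of `D`
may be projected by `P`, and a symmetric operator moves freely between the two slots of a trace,
so the sum equals `-∑ ⟪D (P eᵢ) (P eᵢ), H⟫ = ‖H‖²`.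
-/

open scoped InnerProductSpace
open Filter Topology

theorem fderiv_clm_apply_const {𝕜 E F G : Type*} [NontriviallyNormedField 𝕜]
    [NormedAddCommGroup E] [NormedSpace 𝕜 E] [NormedAddCommGroup F] [NormedSpace 𝕜 F]
    [NormedAddCommGroup G] [NormedSpace 𝕜 G] {c : E → F →L[𝕜] G} {x : E}
    (hc : DifferentiableAt 𝕜 c x) (v : F) :
    fderiv 𝕜 (fun y => c y v) x = (fderiv 𝕜 c x).flip v := by
  rw [fderiv_clm_apply hc (differentiableAt_const v)]
  simp

variable {E : Type*} [NormedAddCommGroup E] [InnerProductSpace ℝ E]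

section ProjectionFamily

variable {U : Set E} {P : E → E →L[ℝ] E} {y : E}

theorem proj_fderiv_add_fderiv_proj (hU : IsOpen U) (hy : y ∈ U) (hP : DifferentiableAt ℝ P y)
    (hidem : ∀ z ∈ U, ∀ v, P z (P z v) = P z v) (u v : E) :
    P y (fderiv ℝ P y u v) + fderiv ℝ P y u (P y v) = fderiv ℝ P y u v := by
  have hPPv : (fun z => P z (P z v)) =ᶠ[𝓝 y] fun z => P z v :=
    eventually_of_mem (hU.mem_nhds hy) fun z hz => hidem z hz v
  have h := congrArg (· u) (hPPv.fderiv_eq (𝕜 := ℝ))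
  rw [fderiv_clm_apply hP (hP.clm_apply (differentiableAt_const v)),
    fderiv_clm_apply_const hP] at h
  simpa using h

theorem proj_fderiv_proj (hU : IsOpen U) (hy : y ∈ U) (hP : DifferentiableAt ℝ P y)
    (hidem : ∀ z ∈ U, ∀ v, P z (P z v) = P z v) (u v : E) :
    P y (fderiv ℝ P y u (P y v)) = 0 := by
  have h := congrArg (P y) (proj_fderiv_add_fderiv_proj hU hy hP hidem u v)
  rwa [map_add, hidem y hy, add_eq_left] at h

theorem inner_fderiv_apply_symm (hU : IsOpen U) (hy : y ∈ U) (hP : DifferentiableAt ℝ P y)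
    (hsa : ∀ z ∈ U, ∀ v w, ⟪P z v, w⟫_ℝ = ⟪v, P z w⟫_ℝ) (u v w : E) :
    ⟪fderiv ℝ P y u v, w⟫_ℝ = ⟪v, fderiv ℝ P y u w⟫_ℝ := by
  have hPvw : (fun z => ⟪P z v, w⟫_ℝ) =ᶠ[𝓝 y] fun z => ⟪v, P z w⟫_ℝ :=
    eventually_of_mem (hU.mem_nhds hy) fun z hz => hsa z hz v w
  have h := congrArg (· u) (hPvw.fderiv_eq (𝕜 := ℝ))
  simp only [fderiv_inner_apply ℝ (hP.clm_apply (differentiableAt_const v))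
    (differentiableAt_const w), fderiv_inner_apply ℝ (differentiableAt_const v)
    (hP.clm_apply (differentiableAt_const w)), fderiv_clm_apply_const hP] at h
  simpa using h

theorem inner_fderiv_apply_proj_of_proj_eq_zero (hU : IsOpen U) (hy : y ∈ U)
    (hP : DifferentiableAt ℝ P y) (hsa : ∀ z ∈ U, ∀ v w, ⟪P z v, w⟫_ℝ = ⟪v, P z w⟫_ℝ)
    (hidem : ∀ z ∈ U, ∀ v, P z (P z v) = P z v) {h : E} (hh : P y h = 0) (u v : E) :
    ⟪fderiv ℝ P y u (P y v), h⟫_ℝ = ⟪fderiv ℝ P y u v, h⟫_ℝ := by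
  rw [← proj_fderiv_add_fderiv_proj hU hy hP hidem u v, inner_add_left, hsa y hy, hh,
    inner_zero_right, zero_add]

end ProjectionFamily

theorem OrthonormalBasis.sum_apply_symm_apply_self {ι F : Type*} [Fintype ι]
    [NormedAddCommGroup F] [NormedSpace ℝ F] (b : OrthonormalBasis ι ℝ E)
    (B : E →L[ℝ] E →L[ℝ] F) {A : E →L[ℝ] E} (hA : ∀ v w, ⟪A v, w⟫_ℝ = ⟪v, A w⟫_ℝ) :
    ∑ i, B (A (b i)) (b i) = ∑ i, B (b i) (A (b i)) := by
  have hexpand : ∀ i, A (b i) = ∑ k, ⟪b k, A (b i)⟫_ℝ • b k := fun i => (b.sum_repr' _).symm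
  calc ∑ i, B (A (b i)) (b i) = ∑ i, ∑ k, ⟪b k, A (b i)⟫_ℝ • B (b k) (b i) := by
        simp only [fun i => congrArg (fun v => B v (b i)) (hexpand i), map_sum, map_smul,
          sum_apply, smul_apply]
    _ = ∑ i, B (b i) (A (b i)) := by
        rw [Finset.sum_comm]
        refine Fintype.sum_congr _ _ fun i => ?_
        conv_rhs => rw [hexpand i, map_sum]
        refine Fintype.sum_congr _ _ fun k => ?_
        rw [map_smul, ← hA, real_inner_comm]

section MeanCurvature

variable {ι : Type*} [Fintype ι] (b : OrthonormalBasis ι ℝ E)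

noncomputable def meanCurvature (P : E → E →L[ℝ] E) (y : E) : E :=
  -∑ j, fderiv ℝ P y (P y (b j)) (P y (b j))

noncomputable def leafwiseDiv (P : E → E →L[ℝ] E) (Y : E → E) (y : E) : ℝ :=
  ∑ j, ⟪fderiv ℝ Y y (P y (b j)), P y (b j)⟫_ℝ

variable {U : Set E} {P : E → E →L[ℝ] E}

theorem contDiffOn_meanCurvature {n : WithTop ℕ∞} (hU : IsOpen U)
    (hP : ContDiffOn ℝ (n + 1) P U) : ContDiffOn ℝ n (meanCurvature b P) U := by
  have hP' : ContDiffOn ℝ n P U := hP.of_le le_self_add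
  have hDP : ContDiffOn ℝ n (fderiv ℝ P) U := hP.fderiv_of_isOpen hU le_rfl
  refine (ContDiffOn.sum fun j _ => ?_).neg
  exact (hDP.clm_apply (hP'.clm_apply contDiffOn_const)).clm_apply
    (hP'.clm_apply contDiffOn_const)

theorem proj_meanCurvature (hU : IsOpen U) {y : E} (hy : y ∈ U) (hP : DifferentiableAt ℝ P y)
    (hidem : ∀ z ∈ U, ∀ v, P z (P z v) = P z v) : P y (meanCurvature b P y) = 0 := by
  simp [meanCurvature, map_sum, proj_fderiv_proj hU hy hP hidem]

theorem leafwiseDiv_clm_apply_const (hU : IsOpen U) {y : E} (hy : y ∈ U)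
    (hP : DifferentiableAt ℝ P y) (hsa : ∀ z ∈ U, ∀ v w, ⟪P z v, w⟫_ℝ = ⟪v, P z w⟫_ℝ) (v : E) :
    leafwiseDiv b P (fun z => P z v) y = -⟪v, meanCurvature b P y⟫_ℝ := by
  simp [leafwiseDiv, meanCurvature, fderiv_clm_apply_const hP, inner_sum,
    inner_fderiv_apply_symm hU hy hP hsa]

theorem proj_fderiv_meanCurvature (hU : IsOpen U) (hP : DifferentiableOn ℝ P U)
    (hidem : ∀ z ∈ U, ∀ v, P z (P z v) = P z v) {x : E} (hx : x ∈ U)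
    (hH : DifferentiableAt ℝ (meanCurvature b P) x) (v : E) :
    P x (fderiv ℝ (meanCurvature b P) x v) = -fderiv ℝ P x v (meanCurvature b P x) := by
  have hPH : (fun z => P z (meanCurvature b P z)) =ᶠ[𝓝 x] fun _ => 0 :=
    eventually_of_mem (hU.mem_nhds hx) fun z hz =>
      proj_meanCurvature b hU hz (hP.differentiableAt (hU.mem_nhds hz)) hidem
  have h := congrArg (· v) (hPH.fderiv_eq (𝕜 := ℝ))
  rw [fderiv_clm_apply (hP.differentiableAt (hU.mem_nhds hx)) hH] at h
  simpa [eq_neg_iff_add_eq_zero] using h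

theorem sum_inner_fderiv_meanCurvature_proj (hU : IsOpen U) (hP : DifferentiableOn ℝ P U)
    (hsa : ∀ z ∈ U, ∀ v w, ⟪P z v, w⟫_ℝ = ⟪v, P z w⟫_ℝ)
    (hidem : ∀ z ∈ U, ∀ v, P z (P z v) = P z v) {x : E} (hx : x ∈ U)
    (hH : DifferentiableAt ℝ (meanCurvature b P) x) :
    ∑ i, ⟪b i, fderiv ℝ (meanCurvature b P) x (P x (b i))⟫_ℝ = ‖meanCurvature b P x‖ ^ 2 := by
  have hPx : DifferentiableAt ℝ P x := hP.differentiableAt (hU.mem_nhds hx)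
  have hPHx : P x (meanCurvature b P x) = 0 := proj_meanCurvature b hU hx hPx hidem
  have hnormal := inner_fderiv_apply_proj_of_proj_eq_zero hU hx hPx hsa hidem hPHx
  calc ∑ i, ⟪b i, fderiv ℝ (meanCurvature b P) x (P x (b i))⟫_ℝ
      = ∑ i, ⟪b i, P x (fderiv ℝ (meanCurvature b P) x (b i))⟫_ℝ := by
        have h := LinearMap.trace_mul_comm ℝ (fderiv ℝ (meanCurvature b P) x : E →ₗ[ℝ] E) (P x)
        rwa [LinearMap.trace_eq_sum_inner _ b, LinearMap.trace_eq_sum_inner _ b] at h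
    _ = -∑ i, ⟪fderiv ℝ P x (b i) (b i), meanCurvature b P x⟫_ℝ := by
        simp only [proj_fderiv_meanCurvature b hU hP hidem hx hH, inner_neg_right,
          ← inner_fderiv_apply_symm hU hx hPx hsa, Finset.sum_neg_distrib]
    _ = -∑ i, ⟪fderiv ℝ P x (b i) (P x (b i)), meanCurvature b P x⟫_ℝ := by
        simp only [hnormal]
    _ = -∑ i, ⟪fderiv ℝ P x (P x (b i)) (b i), meanCurvature b P x⟫_ℝ := by
        rw [← sum_inner, ← sum_inner, b.sum_apply_symm_apply_self _ (hsa x hx)]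
    _ = -∑ i, ⟪fderiv ℝ P x (P x (b i)) (P x (b i)), meanCurvature b P x⟫_ℝ := by
        simp only [hnormal]
    _ = -⟪-meanCurvature b P x, meanCurvature b P x⟫_ℝ := by
        rw [← sum_inner, meanCurvature, neg_neg]
    _ = ‖meanCurvature b P x‖ ^ 2 := by
        rw [inner_neg_left, neg_neg, real_inner_self_eq_norm_sq]

end MeanCurvature

/-- Formula (3) of Corollary 3.2: `‖H‖² = −∑ i Xᵢ(div_E Xᵢ)` for the projected gradient
fields `Xᵢ(y) = Pt y eᵢ` of a C² family `Pt` (playing the role of `P̃`) of orthogonal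
projections on the open set `U`, where `fᵢ = div_E Xᵢ` is the leafwise divergence and
`H x = −∑ j (fderiv ℝ Pt x (Pt x eⱼ))(Pt x eⱼ)` is the mean curvature vector. -/
theorem normSq_meanCurvature_eq_neg_sum {N : ℕ}
    (U : Set (EuclideanSpace ℝ (Fin N))) (hU : IsOpen U)
    (Pt : EuclideanSpace ℝ (Fin N) → (EuclideanSpace ℝ (Fin N) →L[ℝ] EuclideanSpace ℝ (Fin N)))
    (hP : ContDiffOn ℝ 2 Pt U)
    (hsa : ∀ y ∈ U, ∀ v w : EuclideanSpace ℝ (Fin N), ⟪Pt y v, w⟫_ℝ = ⟪v, Pt y w⟫_ℝ)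
    (hidem : ∀ y ∈ U, ∀ v : EuclideanSpace ℝ (Fin N), Pt y (Pt y v) = Pt y v)
    (X : Fin N → EuclideanSpace ℝ (Fin N) → EuclideanSpace ℝ (Fin N))
    (hX : ∀ i y, X i y = Pt y (EuclideanSpace.single i (1 : ℝ)))
    (f : Fin N → EuclideanSpace ℝ (Fin N) → ℝ)
    (hf : ∀ i y, f i y = ∑ j : Fin N,
        ⟪(fderiv ℝ (X i) y) (Pt y (EuclideanSpace.single j (1 : ℝ))),
          Pt y (EuclideanSpace.single j (1 : ℝ))⟫_ℝ)
    (H : EuclideanSpace ℝ (Fin N) → EuclideanSpace ℝ (Fin N))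
    (hH : ∀ y, H y = -∑ j : Fin N,
        (fderiv ℝ Pt y (Pt y (EuclideanSpace.single j (1 : ℝ))))
          (Pt y (EuclideanSpace.single j (1 : ℝ))))
    (x : EuclideanSpace ℝ (Fin N)) (hx : x ∈ U) :
    ‖H x‖ ^ 2 = -∑ i : Fin N, (fderiv ℝ (f i) x) (X i x) := by
  set b := EuclideanSpace.basisFun (Fin N) ℝ
  have hb : ∀ i, b i = EuclideanSpace.single i 1 := EuclideanSpace.basisFun_apply (Fin N) ℝ
  have hPd : DifferentiableOn ℝ Pt U := hP.differentiableOn two_ne_zero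
  have hHb : H = meanCurvature b Pt := funext fun y => by simp only [hH, meanCurvature, hb]
  have hHd : DifferentiableAt ℝ H x := by
    rw [hHb]
    exact ((contDiffOn_meanCurvature b hU (n := 1) hP).contDiffAt
      (hU.mem_nhds hx)).differentiableAt one_ne_zero
  have hfH : ∀ i, ∀ y ∈ U, f i y = -⟪b i, H y⟫_ℝ := fun i y hy => by
    rw [hf, hHb, ← leafwiseDiv_clm_apply_const b hU hy (hPd.differentiableAt (hU.mem_nhds hy)) hsa]
    simp only [leafwiseDiv, hb, funext (hX i)]
  have hdf : ∀ i, fderiv ℝ (f i) x (X i x) = -⟪b i, fderiv ℝ H x (Pt x (b i))⟫_ℝ := fun i => by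
    have hfx : f i =ᶠ[𝓝 x] fun y => -⟪b i, H y⟫_ℝ := eventually_of_mem (hU.mem_nhds hx) (hfH i)
    rw [hfx.fderiv_eq, fderiv_fun_neg, neg_apply,
      fderiv_inner_apply ℝ (differentiableAt_const _) hHd, hX, hb]
    simp
  calc ‖H x‖ ^ 2 = ∑ i, ⟪b i, fderiv ℝ H x (Pt x (b i))⟫_ℝ := by
        rw [hHb] at hHd ⊢
        exact (sum_inner_fderiv_meanCurvature_proj b hU hPd hsa hidem hx hHd).symm
    _ = -∑ i, fderiv ℝ (f i) x (X i x) := by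
        simp only [hdf, Finset.sum_neg_distrib, neg_neg]
end

section
/- Let U ⊆ ℝ^N be open and let P, P̃ : U → (ℝ^N →L[ℝ] ℝ^N) be maps such that for every y ∈ U both P(y) and P̃(y) are orthogonal projections with P(y) ∘ P̃(y) = P̃(y) = P̃(y) ∘ P(y), and P̃ is differentiable at x ∈ U. Define the tension κ(x) := −P̃(x)( ∑_{i=1}^N (fderiv ℝ P̃ x ((P(x) − P̃(x)) e_i))((P(x) − P̃(x)) e_i) ). Then for every vector field X : U → ℝ^N differentiable at x with X(y) = P̃(y) X(y) for all y ∈ U, one has div_E X(x) − div X(x) = ⟨κ(x), X(x)⟩, where div X(x) := ∑_{i=1}^N ⟨(fderiv ℝ X x)(P(x) e_i), P(x) e_i⟩ and div_E X(x) := ∑_{i=1}^N ⟨(fderiv ℝ X x)(P̃(x) e_i), P̃(x) e_i⟩. -/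
open scoped InnerProductSpace
open Filter Topology

/-!
Write `T = DX(x)` and `R = P(x) - P̃(x)`, again an orthogonal projection. Both divergences are
traces, so `div_E X - div X = tr (T P̃) - tr (T P) = -tr (T R) = -∑ ⟪T R eᵢ, R eᵢ⟫`.
Differentiating `X = P̃ X` gives `T v = P̃ (T v) + (DP̃ v) X`, and as `P̃ R = 0` only the second
term survives against `R eᵢ`. Finally `DP̃ v` is symmetric, being a derivative of a family of
symmetric operators, which turns `-∑ ⟪(DP̃ (R eᵢ)) X, R eᵢ⟫` into `⟪κ, X⟫`.
-/

section Trace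

variable {E ι : Type*} [NormedAddCommGroup E] [InnerProductSpace ℝ E] [Fintype ι]

theorem LinearMap.IsSymmetricProjection.sum_inner_map_apply_eq_trace {A : E →ₗ[ℝ] E}
    (hA : A.IsSymmetricProjection) (M : E →ₗ[ℝ] E) (b : OrthonormalBasis ι ℝ E) :
    ∑ i, ⟪M (A (b i)), A (b i)⟫_ℝ = LinearMap.trace ℝ E (M * A) := by
  have hterm (i : ι) : ⟪M (A (b i)), A (b i)⟫_ℝ = ⟪b i, (A * (M * A)) (b i)⟫_ℝ := by
    rw [← hA.isSymmetric, real_inner_comm]; rfl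
  rw [Fintype.sum_congr _ _ hterm, ← LinearMap.trace_eq_sum_inner, LinearMap.trace_mul_comm,
    mul_assoc, hA.isIdempotentElem.eq]

theorem LinearMap.IsSymmetricProjection.sum_inner_map_apply_sub_sum_inner_map_apply
    {Q Qt : E →ₗ[ℝ] E} (hQ : Q.IsSymmetricProjection) (hQt : Qt.IsSymmetricProjection)
    (hQtQ : Qt * Q = Qt) (hQQt : Q * Qt = Qt) (M : E →ₗ[ℝ] E) (b : OrthonormalBasis ι ℝ E) :
    ∑ i, ⟪M (Qt (b i)), Qt (b i)⟫_ℝ - ∑ i, ⟪M (Q (b i)), Q (b i)⟫_ℝ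
      = -∑ i, ⟪M ((Q - Qt) (b i)), (Q - Qt) (b i)⟫_ℝ := by
  have hR : (Q - Qt).IsSymmetricProjection :=
    ⟨hQt.isIdempotentElem.sub hQ.isIdempotentElem hQtQ hQQt, hQ.isSymmetric.sub hQt.isSymmetric⟩
  rw [hQ.sum_inner_map_apply_eq_trace, hQt.sum_inner_map_apply_eq_trace,
    hR.sum_inner_map_apply_eq_trace, mul_sub, map_sub, neg_sub]

end Trace

theorem isSymmetric_fderiv_apply_of_eventually {F E : Type*} [NormedAddCommGroup F]
    [NormedSpace ℝ F] [NormedAddCommGroup E] [InnerProductSpace ℝ E] {A : F → E →L[ℝ] E} {x : F}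
    (hA : ∀ᶠ y in 𝓝 x, (A y : E →ₗ[ℝ] E).IsSymmetric) (hdiff : DifferentiableAt ℝ A x) (v : F) :
    (fderiv ℝ A x v : E →ₗ[ℝ] E).IsSymmetric := by
  intro w₁ w₂
  have hAw (w : E) : HasFDerivAt (fun y ↦ A y w) ((fderiv ℝ A x).flip w) x := by
    simpa using hdiff.hasFDerivAt.clm_apply (hasFDerivAt_const w x)
  have hleft := (hAw w₁).inner ℝ (hasFDerivAt_const w₂ x)
  have hright := (hasFDerivAt_const w₁ x).inner ℝ (hAw w₂)
  have heq : (fun y ↦ ⟪A y w₁, w₂⟫_ℝ) =ᶠ[𝓝 x] fun y ↦ ⟪w₁, A y w₂⟫_ℝ :=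
    hA.mono fun y hy ↦ hy w₁ w₂
  simpa using congr($((hleft.congr_of_eventuallyEq heq.symm).unique hright) v)

theorem fderiv_apply_eq_add_of_eventuallyEq_clm_apply {𝕜 F E : Type*} [NontriviallyNormedField 𝕜]
    [NormedAddCommGroup F] [NormedSpace 𝕜 F] [NormedAddCommGroup E] [NormedSpace 𝕜 E]
    {A : F → E →L[𝕜] E} {X : F → E} {x : F} (hX : X =ᶠ[𝓝 x] fun y ↦ A y (X y))
    (hA : DifferentiableAt 𝕜 A x) (hXd : DifferentiableAt 𝕜 X x) (v : F) :
    fderiv 𝕜 X x v = A x (fderiv 𝕜 X x v) + fderiv 𝕜 A x v (X x) := by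
  conv_lhs => rw [hX.fderiv_eq, fderiv_clm_apply hA hXd]
  simp

/-- Definition 2.3 realized in the embedding: the tension
`κ x = −Pt x (∑ i (fderiv ℝ Pt x ((P x − Pt x) eᵢ))((P x − Pt x) eᵢ))` satisfies
`div_E X x − div X x = ⟪κ x, X x⟫` for every leafwise vector field `X`
(`X y = Pt y (X y)`), where `P y` projects onto the ambient tangent space `T_yM` and
`Pt y` (playing the role of `P̃`) onto the leaf tangent space `E_y ⊆ T_yM`. -/
theorem tension_inner_eq_divE_sub_div {N : ℕ}
    (U : Set (EuclideanSpace ℝ (Fin N))) (hU : IsOpen U)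
    (P Pt : EuclideanSpace ℝ (Fin N) → (EuclideanSpace ℝ (Fin N) →L[ℝ] EuclideanSpace ℝ (Fin N)))
    (hPsa : ∀ y ∈ U, ∀ v w : EuclideanSpace ℝ (Fin N), ⟪P y v, w⟫_ℝ = ⟪v, P y w⟫_ℝ)
    (hPidem : ∀ y ∈ U, ∀ v : EuclideanSpace ℝ (Fin N), P y (P y v) = P y v)
    (hPtsa : ∀ y ∈ U, ∀ v w : EuclideanSpace ℝ (Fin N), ⟪Pt y v, w⟫_ℝ = ⟪v, Pt y w⟫_ℝ)
    (hPtidem : ∀ y ∈ U, ∀ v : EuclideanSpace ℝ (Fin N), Pt y (Pt y v) = Pt y v)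
    (hcomp : ∀ y ∈ U, (P y).comp (Pt y) = Pt y ∧ (Pt y).comp (P y) = Pt y)
    (x : EuclideanSpace ℝ (Fin N)) (hx : x ∈ U)
    (hdiff : DifferentiableAt ℝ Pt x)
    (κ : EuclideanSpace ℝ (Fin N))
    (hκ : κ = -(Pt x (∑ i : Fin N,
        (fderiv ℝ Pt x ((P x - Pt x) (EuclideanSpace.single i (1 : ℝ))))
          ((P x - Pt x) (EuclideanSpace.single i (1 : ℝ))))))
    (X : EuclideanSpace ℝ (Fin N) → EuclideanSpace ℝ (Fin N))
    (hXdiff : DifferentiableAt ℝ X x)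
    (hXleaf : ∀ y ∈ U, X y = Pt y (X y)) :
    (∑ i : Fin N, ⟪(fderiv ℝ X x) (Pt x (EuclideanSpace.single i (1 : ℝ))),
          Pt x (EuclideanSpace.single i (1 : ℝ))⟫_ℝ)
      - (∑ i : Fin N, ⟪(fderiv ℝ X x) (P x (EuclideanSpace.single i (1 : ℝ))),
          P x (EuclideanSpace.single i (1 : ℝ))⟫_ℝ)
      = ⟪κ, X x⟫_ℝ := by
  set b := EuclideanSpace.basisFun (Fin N) ℝ
  set T := fderiv ℝ X x
  set D := fderiv ℝ Pt x
  have hPx : (P x).toLinearMap.IsSymmetricProjection :=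
    ⟨LinearMap.ext (hPidem x hx), hPsa x hx⟩
  have hPtx : (Pt x).toLinearMap.IsSymmetricProjection :=
    ⟨LinearMap.ext (hPtidem x hx), hPtsa x hx⟩
  have hPtP : (Pt x).toLinearMap * (P x).toLinearMap = (Pt x).toLinearMap :=
    congr($((hcomp x hx).2).toLinearMap)
  have hPPt : (P x).toLinearMap * (Pt x).toLinearMap = (Pt x).toLinearMap :=
    congr($((hcomp x hx).1).toLinearMap)
  have hPtR (v) : Pt x ((P x - Pt x) v) = 0 := by
    simp [← ContinuousLinearMap.comp_apply, (hcomp x hx).2, hPtidem x hx]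
  have hD (v) : (D v).toLinearMap.IsSymmetric :=
    isSymmetric_fderiv_apply_of_eventually
      (eventually_of_mem (hU.mem_nhds hx) hPtsa) hdiff v
  have hT := fderiv_apply_eq_add_of_eventuallyEq_clm_apply
    (eventually_of_mem (hU.mem_nhds hx) hXleaf) hdiff hXdiff
  have hterm (v) : ⟪T ((P x - Pt x) v), (P x - Pt x) v⟫_ℝ
      = ⟪D ((P x - Pt x) v) ((P x - Pt x) v), X x⟫_ℝ := by
    rw [hT, inner_add_left, hPtsa x hx, hPtR, inner_zero_right, zero_add]
    exact (hD _ _ _).trans (real_inner_comm _ _)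
  have hsum := hPx.sum_inner_map_apply_sub_sum_inner_map_apply hPtx hPtP hPPt T.toLinearMap b
  simp only [← ContinuousLinearMap.toLinearMap_sub, ContinuousLinearMap.coe_coe, b,
    EuclideanSpace.basisFun_apply] at hsum
  rw [hsum, hκ, inner_neg_left, hPtsa x hx, ← hXleaf x hx, sum_inner]
  simp only [hterm]
end

section
/- Let U ⊆ ℝ^N be open, let P, P̃ : U → (ℝ^N →L[ℝ] ℝ^N) satisfy that each P(y), P̃(y) is an orthogonal projection with P(y) ∘ P̃(y) = P̃(y) = P̃(y) ∘ P(y), let P̃ be differentiable at x, and suppose there is a map η : U → ℝ^N, differentiable at x, with ‖η(y)‖ = 1, P(y) η(y) = η(y), and (P(y) − P̃(y)) v = ⟨v, η(y)⟩ • η(y) for all y ∈ U and v ∈ ℝ^N (codimension-one foliation of the manifold with unit normal field η inside it). Then the tension κ(x) := −P̃(x)( ∑_{i=1}^N (fderiv ℝ P̃ x ((P(x) − P̃(x)) e_i))((P(x) − P̃(x)) e_i) ) satisfies κ(x) = P(x)((fderiv ℝ η x)(η(x))), the tangential derivative of η along itself. -/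
/-!
Since `P − Pt` is the orthogonal projection onto the unit vector `η`, the sum defining `κ`
collapses to `(D Pt)(η)(η)`. Differentiating the identity `Pt y (η y) = 0` along `η` turns this
into `−Pt (Dη η)`, and differentiating `‖η‖² = 1` shows `Dη η ⊥ η`, so `P` and `Pt` agree on
`Dη η`.
-/

open scoped InnerProductSpace
open Filter Topology

section

variable {E F : Type*} [NormedAddCommGroup E] [NormedSpace ℝ E]
  [NormedAddCommGroup F] [InnerProductSpace ℝ F]

theorem inner_fderiv_apply_self_eq_zero_of_eventually_norm_eq {η : E → F} {x : E} {c : ℝ}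
    (hη : DifferentiableAt ℝ η x) (hnorm : ∀ᶠ y in 𝓝 x, ‖η y‖ = c) (v : E) :
    ⟪fderiv ℝ η x v, η x⟫_ℝ = 0 := by
  have hconst : HasFDerivAt (‖η ·‖ ^ 2) (0 : E →L[ℝ] ℝ) x :=
    (hasFDerivAt_const (c ^ 2) x).congr_of_eventuallyEq <| by
      filter_upwards [hnorm] with y hy
      rw [hy]
  have h := congrArg (· v) (hη.hasFDerivAt.norm_sq.unique hconst)
  simp only [smul_apply, ContinuousLinearMap.comp_apply, innerSL_apply_apply, zero_apply] at h
  rw [real_inner_comm]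
  exact (smul_eq_zero.mp h).resolve_left two_ne_zero

end

section

variable {𝕜 E F G : Type*} [NontriviallyNormedField 𝕜] [NormedAddCommGroup E] [NormedSpace 𝕜 E]
  [NormedAddCommGroup F] [NormedSpace 𝕜 F] [NormedAddCommGroup G] [NormedSpace 𝕜 G]

theorem apply_fderiv_add_fderiv_apply_eq_zero_of_eventually_apply_eq_zero
    {A : E → F →L[𝕜] G} {u : E → F} {x : E}
    (hA : DifferentiableAt 𝕜 A x) (hu : DifferentiableAt 𝕜 u x)
    (hzero : ∀ᶠ y in 𝓝 x, A y (u y) = 0) (v : E) :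
    A x (fderiv 𝕜 u x v) + fderiv 𝕜 A x v (u x) = 0 := by
  have h := congrArg (· v) ((hA.hasFDerivAt.clm_apply hu.hasFDerivAt).unique
    ((hasFDerivAt_const (0 : G) x).congr_of_eventuallyEq hzero))
  simpa using h

end

theorem OrthonormalBasis.sum_apply_inner_smul_apply_inner_smul {ι E F : Type*} [Fintype ι]
    [NormedAddCommGroup E] [InnerProductSpace ℝ E] [NormedAddCommGroup F] [NormedSpace ℝ F]
    (b : OrthonormalBasis ι ℝ E) (B : E →L[ℝ] E →L[ℝ] F) (n : E) :
    ∑ i, B (⟪b i, n⟫_ℝ • n) (⟪b i, n⟫_ℝ • n) = ‖n‖ ^ 2 • B n n := by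
  simp only [map_smul, smul_apply, smul_smul, ← Finset.sum_smul]
  rw [← real_inner_self_eq_norm_sq, ← b.sum_inner_mul_inner n n]
  simp_rw [real_inner_comm n]

theorem tension_eq_tangential_derivative_of_normal_general {N : ℕ}
    (U : Set (EuclideanSpace ℝ (Fin N))) (hU : IsOpen U)
    (P Pt : EuclideanSpace ℝ (Fin N) → (EuclideanSpace ℝ (Fin N) →L[ℝ] EuclideanSpace ℝ (Fin N)))
    (hPtidem : ∀ y ∈ U, ∀ v : EuclideanSpace ℝ (Fin N), Pt y (Pt y v) = Pt y v)
    (x : EuclideanSpace ℝ (Fin N)) (hx : x ∈ U)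
    (hdiffPt : DifferentiableAt ℝ Pt x)
    (η : EuclideanSpace ℝ (Fin N) → EuclideanSpace ℝ (Fin N))
    (hdiffη : DifferentiableAt ℝ η x)
    (hηnorm : ∀ y ∈ U, ‖η y‖ = 1)
    (hηtang : ∀ y ∈ U, P y (η y) = η y)
    (hηproj : ∀ y ∈ U, ∀ v : EuclideanSpace ℝ (Fin N),
        (P y - Pt y) v = ⟪v, η y⟫_ℝ • η y)
    (κ : EuclideanSpace ℝ (Fin N))
    (hκ : κ = -(Pt x (∑ i : Fin N,
        (fderiv ℝ Pt x ((P x - Pt x) (EuclideanSpace.single i (1 : ℝ))))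
          ((P x - Pt x) (EuclideanSpace.single i (1 : ℝ)))))) :
    κ = P x ((fderiv ℝ η x) (η x)) := by
  have hU_nhds : ∀ᶠ y in 𝓝 x, y ∈ U := hU.mem_nhds hx
  have hleaf_normal : ∀ y ∈ U, Pt y (η y) = 0 := fun y hy => by
    have h := hηproj y hy (η y)
    rwa [real_inner_self_eq_norm_sq, hηnorm y hy, one_pow, one_smul, sub_apply, hηtang y hy,
      sub_eq_self] at h
  have hsum : ∑ i : Fin N, (fderiv ℝ Pt x ((P x - Pt x) (EuclideanSpace.single i (1 : ℝ))))
      ((P x - Pt x) (EuclideanSpace.single i (1 : ℝ))) = fderiv ℝ Pt x (η x) (η x) := by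
    simp_rw [hηproj x hx, ← EuclideanSpace.basisFun_apply]
    rw [OrthonormalBasis.sum_apply_inner_smul_apply_inner_smul, hηnorm x hx, one_pow, one_smul]
  have hsecond : fderiv ℝ Pt x (η x) (η x) = -Pt x (fderiv ℝ η x (η x)) :=
    eq_neg_of_add_eq_zero_right (apply_fderiv_add_fderiv_apply_eq_zero_of_eventually_apply_eq_zero
      hdiffPt hdiffη (hU_nhds.mono hleaf_normal) (η x))
  have htangent : P x (fderiv ℝ η x (η x)) = Pt x (fderiv ℝ η x (η x)) := by
    have h := hηproj x hx (fderiv ℝ η x (η x))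
    rwa [inner_fderiv_apply_self_eq_zero_of_eventually_norm_eq hdiffη (hU_nhds.mono hηnorm),
      zero_smul, sub_apply, sub_eq_zero] at h
  rw [hκ, hsum, hsecond, map_neg, neg_neg, hPtidem x hx, htangent]

/-- The computation from the proof of Proposition 2.4 for a codimension-one (within `M`)
foliation with unit normal field `η`: the tension
`κ x = −Pt x (∑ i (fderiv ℝ Pt x ((P x − Pt x) eᵢ))((P x − Pt x) eᵢ))` equals the
tangential derivative of `η` along itself, `κ x = P x ((fderiv ℝ η x)(η x))`.
Here `P y` projects onto the ambient tangent space `T_yM` and `Pt y` (playing the role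
of `P̃`) onto the leaf tangent space `E_y ⊆ T_yM`, with
`(P y − Pt y) v = ⟪v, η y⟫ • η y`. -/
theorem tension_eq_tangential_derivative_of_normal {N : ℕ}
    (U : Set (EuclideanSpace ℝ (Fin N))) (hU : IsOpen U)
    (P Pt : EuclideanSpace ℝ (Fin N) → (EuclideanSpace ℝ (Fin N) →L[ℝ] EuclideanSpace ℝ (Fin N)))
    (hPsa : ∀ y ∈ U, ∀ v w : EuclideanSpace ℝ (Fin N), ⟪P y v, w⟫_ℝ = ⟪v, P y w⟫_ℝ)
    (hPidem : ∀ y ∈ U, ∀ v : EuclideanSpace ℝ (Fin N), P y (P y v) = P y v)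
    (hPtsa : ∀ y ∈ U, ∀ v w : EuclideanSpace ℝ (Fin N), ⟪Pt y v, w⟫_ℝ = ⟪v, Pt y w⟫_ℝ)
    (hPtidem : ∀ y ∈ U, ∀ v : EuclideanSpace ℝ (Fin N), Pt y (Pt y v) = Pt y v)
    (hcomp : ∀ y ∈ U, (P y).comp (Pt y) = Pt y ∧ (Pt y).comp (P y) = Pt y)
    (x : EuclideanSpace ℝ (Fin N)) (hx : x ∈ U)
    (hdiffPt : DifferentiableAt ℝ Pt x)
    (η : EuclideanSpace ℝ (Fin N) → EuclideanSpace ℝ (Fin N))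
    (hdiffη : DifferentiableAt ℝ η x)
    (hηnorm : ∀ y ∈ U, ‖η y‖ = 1)
    (hηtang : ∀ y ∈ U, P y (η y) = η y)
    (hηproj : ∀ y ∈ U, ∀ v : EuclideanSpace ℝ (Fin N),
        (P y - Pt y) v = ⟪v, η y⟫_ℝ • η y)
    (κ : EuclideanSpace ℝ (Fin N))
    (hκ : κ = -(Pt x (∑ i : Fin N,
        (fderiv ℝ Pt x ((P x - Pt x) (EuclideanSpace.single i (1 : ℝ))))
          ((P x - Pt x) (EuclideanSpace.single i (1 : ℝ)))))) :
    κ = P x ((fderiv ℝ η x) (η x)) :=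
  tension_eq_tangential_derivative_of_normal_general U hU P Pt hPtidem x hx hdiffPt η hdiffη hηnorm
    hηtang hηproj κ hκ
end

section
/- Let U ⊆ ℝ^N be open, P̃ : U → (ℝ^N →L[ℝ] ℝ^N) continuously differentiable with each P̃(y) an orthogonal projection, and f : U → ℝ twice continuously differentiable. With X_i g (y) := (fderiv ℝ g y)(P̃(y) e_i) and Δ_E g := ∑_{i=1}^N X_i(X_i g) for twice continuously differentiable g : U → ℝ, one has for every x ∈ U: Δ_E(f²)(x) − 2 f(x) Δ_E f(x) = 2 ‖P̃(x)(gradient f x)‖². -/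
/-!
Each leafwise derivative `X_i g (y) = Dg(y)(P̃(y) eᵢ)` obeys the Leibniz rule, so
`X_i X_i (f²) = 2 (X_i f)² + 2 f X_i X_i f`; summing over `i`, the second term is `2 f Δ_E f`.
By self-adjointness `X_i f (x) = ⟪P̃(x) ∇f(x), eᵢ⟫`, so `∑ (X_i f)²` is Parseval's identity
for `P̃(x) ∇f(x)`.
-/

open scoped InnerProductSpace
open Filter Topology

section SecondDerivativeOfSquare

variable {E : Type*} [NormedAddCommGroup E] [NormedSpace ℝ E]

lemma fderiv_sq_apply {g : E → ℝ} {y : E} (hg : DifferentiableAt ℝ g y) (v : E) :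
    fderiv ℝ (fun z => g z ^ 2) y v = 2 * g y * fderiv ℝ g y v := by
  rw [fderiv_fun_pow 2 hg]
  simp [mul_assoc]

lemma fderiv_fderiv_sq_apply {g : E → ℝ} {V : E → E} {x : E}
    (hg : ∀ᶠ y in 𝓝 x, DifferentiableAt ℝ g y)
    (hVg : DifferentiableAt ℝ (fun y => fderiv ℝ g y (V y)) x) (w : E) :
    fderiv ℝ (fun y => fderiv ℝ (fun z => g z ^ 2) y (V y)) x w =
      2 * fderiv ℝ g x w * fderiv ℝ g x (V x) +
        2 * g x * fderiv ℝ (fun y => fderiv ℝ g y (V y)) x w := by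
  have hsq : (fun y => fderiv ℝ (fun z => g z ^ 2) y (V y)) =ᶠ[𝓝 x]
      fun y => 2 * g y * fderiv ℝ g y (V y) :=
    hg.mono fun y hy => fderiv_sq_apply hy (V y)
  rw [hsq.fderiv_eq, fderiv_fun_mul (hg.self_of_nhds.const_mul 2) hVg,
    fderiv_const_mul hg.self_of_nhds]
  simp only [add_apply, smul_apply, smul_eq_mul]
  ring

end SecondDerivativeOfSquare

lemma OrthonormalBasis.sum_sq_fderiv_apply_of_isSymmetric {ι E : Type*} [Fintype ι]
    [NormedAddCommGroup E] [InnerProductSpace ℝ E] [CompleteSpace E]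
    (b : OrthonormalBasis ι ℝ E) {P : E →L[ℝ] E} (hP : (P : E →ₗ[ℝ] E).IsSymmetric)
    (f : E → ℝ) (x : E) :
    ∑ i, fderiv ℝ f x (P (b i)) ^ 2 = ‖P (gradient f x)‖ ^ 2 := by
  calc ∑ i, fderiv ℝ f x (P (b i)) ^ 2 = ∑ i, ⟪P (gradient f x), b i⟫_ℝ ^ 2 := by
        simp_rw [← inner_gradient_left]
        exact Finset.sum_congr rfl fun i _ => congrArg (· ^ 2) (hP _ _).symm
    _ = ‖P (gradient f x)‖ ^ 2 := b.sum_sq_inner_left _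

theorem leafwise_laplacian_sq_identity_general {N : ℕ}
    (U : Set (EuclideanSpace ℝ (Fin N))) (hU : IsOpen U)
    (Pt : EuclideanSpace ℝ (Fin N) → (EuclideanSpace ℝ (Fin N) →L[ℝ] EuclideanSpace ℝ (Fin N)))
    (hP : ContDiffOn ℝ 1 Pt U)
    (hsa : ∀ y ∈ U, ∀ v w : EuclideanSpace ℝ (Fin N), ⟪Pt y v, w⟫_ℝ = ⟪v, Pt y w⟫_ℝ)
    (f : EuclideanSpace ℝ (Fin N) → ℝ) (hf : ContDiffOn ℝ 2 f U)
    (ΔE : (EuclideanSpace ℝ (Fin N) → ℝ) → EuclideanSpace ℝ (Fin N) → ℝ)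
    (hΔE : ∀ (g : EuclideanSpace ℝ (Fin N) → ℝ) (x : EuclideanSpace ℝ (Fin N)),
      ΔE g x = ∑ i : Fin N,
        (fderiv ℝ (fun y => fderiv ℝ g y (Pt y (EuclideanSpace.single i (1 : ℝ)))) x)
          (Pt x (EuclideanSpace.single i (1 : ℝ))))
    (x : EuclideanSpace ℝ (Fin N)) (hx : x ∈ U) :
    ΔE (fun y => f y ^ 2) x - 2 * f x * ΔE f x = 2 * ‖Pt x (gradient f x)‖ ^ 2 := by
  have hf_diff : ∀ᶠ y in 𝓝 x, DifferentiableAt ℝ f y :=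
    eventually_of_mem (hU.mem_nhds hx) fun y hy =>
      (hf.contDiffAt (hU.mem_nhds hy)).differentiableAt (by norm_num)
  have hXf_diff : ∀ v, DifferentiableAt ℝ (fun y => fderiv ℝ f y (Pt y v)) x := fun v =>
    (((hf.fderiv_of_isOpen hU (by norm_num)).clm_apply (hP.clm_apply contDiffOn_const)).contDiffAt
      (hU.mem_nhds hx)).differentiableAt one_ne_zero
  rw [hΔE, hΔE, ← (EuclideanSpace.basisFun (Fin N) ℝ).sum_sq_fderiv_apply_of_isSymmetric (hsa x hx)]
  simp only [fderiv_fderiv_sq_apply hf_diff (hXf_diff _), Finset.sum_add_distrib, ← Finset.mul_sum,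
    EuclideanSpace.basisFun_apply, mul_assoc, ← sq]
  ring

/-- The computational core of Corollary 3.3:
`Δ_E(f²)(x) − 2 f(x) Δ_E f(x) = 2 ‖grad_E f (x)‖²`, where
`Δ_E g (x) = ∑ i (fderiv ℝ (y ↦ fderiv ℝ g y (Pt y eᵢ)) x)(Pt x eᵢ)` is the leafwise
Laplacian and `grad_E f (x) = Pt x (gradient f x)` the leafwise gradient, for a C¹
family `Pt` (playing the role of `P̃`) of orthogonal projections and `f` C² on `U`. -/
theorem leafwise_laplacian_sq_identity {N : ℕ}
    (U : Set (EuclideanSpace ℝ (Fin N))) (hU : IsOpen U)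
    (Pt : EuclideanSpace ℝ (Fin N) → (EuclideanSpace ℝ (Fin N) →L[ℝ] EuclideanSpace ℝ (Fin N)))
    (hP : ContDiffOn ℝ 1 Pt U)
    (hsa : ∀ y ∈ U, ∀ v w : EuclideanSpace ℝ (Fin N), ⟪Pt y v, w⟫_ℝ = ⟪v, Pt y w⟫_ℝ)
    (hidem : ∀ y ∈ U, ∀ v : EuclideanSpace ℝ (Fin N), Pt y (Pt y v) = Pt y v)
    (f : EuclideanSpace ℝ (Fin N) → ℝ) (hf : ContDiffOn ℝ 2 f U)
    (ΔE : (EuclideanSpace ℝ (Fin N) → ℝ) → EuclideanSpace ℝ (Fin N) → ℝ)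
    (hΔE : ∀ (g : EuclideanSpace ℝ (Fin N) → ℝ) (x : EuclideanSpace ℝ (Fin N)),
      ΔE g x = ∑ i : Fin N,
        (fderiv ℝ (fun y => fderiv ℝ g y (Pt y (EuclideanSpace.single i (1 : ℝ)))) x)
          (Pt x (EuclideanSpace.single i (1 : ℝ))))
    (x : EuclideanSpace ℝ (Fin N)) (hx : x ∈ U) :
    ΔE (fun y => f y ^ 2) x - 2 * f x * ΔE f x = 2 * ‖Pt x (gradient f x)‖ ^ 2 :=
  leafwise_laplacian_sq_identity_general U hU Pt hP hsa f hf ΔE hΔE x hx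
end

section
/- Let U ⊆ ℝ^N be open and let P, P̃ : U → (ℝ^N →L[ℝ] ℝ^N) be twice continuously differentiable maps such that for every y ∈ U both P(y) and P̃(y) are orthogonal projections with P(y) ∘ P̃(y) = P̃(y) = P̃(y) ∘ P(y), and let V : U → ℝ^N be continuously differentiable with V(y) = P̃(y) V(y) for all y ∈ U. With X_i(y) := P̃(y) e_i, div Y(x) := ∑_{j=1}^N ⟨(fderiv ℝ Y x)(P(x) e_j), P(x) e_j⟩, div_E Y(x) := ∑_{j=1}^N ⟨(fderiv ℝ Y x)(P̃(x) e_j), P̃(x) e_j⟩, mean curvature H(x) := −∑_{j=1}^N (fderiv ℝ P̃ x (P̃(x) e_j))(P̃(x) e_j), and tension κ(y) := −P̃(y)( ∑_{i=1}^N (fderiv ℝ P̃ y ((P(y) − P̃(y)) e_i))((P(y) − P̃(y)) e_i) ), one has for every x ∈ U: div V(x) + (1/2) ∑_{i=1}^N (fderiv ℝ (div X_i) x)(X_i(x)) = −(1/2)( ‖H(x)‖² − div_E(2V − κ)(x) + 2⟨κ(x), V(x)⟩ ). -/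
/-!
Write `Q = P̃`, `A = DQ`, `R = P - Q` and `W = ∑ⱼ A(Peⱼ)(Peⱼ)`. Differentiating `Q² = Q` and
`Q* = Q` shows that every `A h` is self-adjoint with `A h = (A h) Q + Q (A h)`; hence
`Q (A h) Q = 0` and `(A h) R = Q (A h) R`. For an orthogonal projection `M` the trace
`∑ᵢ Φ(Meᵢ, Meᵢ)` of a bilinear map equals `∑ᵢ Φ(eᵢ, Meᵢ)`, so it is additive in `M`: thus
`W = -H + τ` with `τ = ∑ᵢ A(Reᵢ)(Reᵢ)`, where `H` lies in `ker Q` and `τ` in `range Q`.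
Consequently `κ = -Q W` and `⟪W, H⟫ = -‖H‖²`. Since `A h` is self-adjoint, `div Xᵢ = ⟪eᵢ, W⟫`,
whence `∑ᵢ Xᵢ(div Xᵢ) = div_E W`; the product rule gives `div_E (Q W) = div_E W - ⟪W, H⟫`, and
for the leafwise field `V` it gives `div V = div_E V + ⟪V, τ⟫ = div_E V - ⟪κ, V⟫`.
-/

open scoped InnerProductSpace
open Filter Topology

section Ring

variable {R : Type*} [Ring R] {q d r : R}

theorem IsIdempotentElem.mul_mul_eq_zero_of_eq_mul_add_mul (hq : IsIdempotentElem q)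
    (hd : d = d * q + q * d) : q * d * q = 0 := by
  have h : q * d * q = q * d * q + q * d * q :=
    calc q * d * q = q * (d * q + q * d) * q := by rw [← hd]
      _ = q * d * (q * q) + (q * q) * d * q := by noncomm_ring
      _ = q * d * q + q * d * q := by rw [hq.eq]
  simpa using h

theorem mul_eq_mul_mul_of_eq_mul_add_mul (hd : d = d * q + q * d) (hqr : q * r = 0) :
    d * r = q * d * r := by
  conv_lhs => rw [hd]
  rw [add_mul, mul_assoc d, hqr, mul_zero, zero_add]

end Ring

section Calculus

variable {G : Type*} [NormedAddCommGroup G] [NormedSpace ℝ G] {x : G}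

theorem fderiv_apply_eq_of_isIdempotentElem {𝔸 : Type*} [NormedRing 𝔸] [NormedAlgebra ℝ 𝔸]
    {f : G → 𝔸} (hf : DifferentiableAt ℝ f x) (h : ∀ᶠ y in 𝓝 x, IsIdempotentElem (f y))
    (v : G) : fderiv ℝ f x v = fderiv ℝ f x v * f x + f x * fderiv ℝ f x v := by
  have hff :=
    (hf.hasFDerivAt.mul' hf.hasFDerivAt).congr_of_eventuallyEq (h.mono fun y hy => hy.eq.symm)
  simpa [add_comm] using congr($(hf.hasFDerivAt.unique hff) v)

theorem isSelfAdjoint_fderiv_apply {F : Type*} [NormedAddCommGroup F] [NormedSpace ℝ F]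
    [StarAddMonoid F] [StarModule ℝ F] [ContinuousStar F] {f : G → F}
    (hf : DifferentiableAt ℝ f x) (h : ∀ᶠ y in 𝓝 x, IsSelfAdjoint (f y)) (v : G) :
    IsSelfAdjoint (fderiv ℝ f x v) :=
  (congr($(hf.hasFDerivAt.unique
    (hf.hasFDerivAt.star.congr_of_eventuallyEq (h.mono fun _ hy => hy.symm))) v)).symm

end Calculus

variable {ι E F : Type*} [Fintype ι] [NormedAddCommGroup E] [InnerProductSpace ℝ E]
  [NormedAddCommGroup F] [NormedSpace ℝ F]

noncomputable section

namespace OrthonormalBasis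

variable (b : OrthonormalBasis ι ℝ E)

def traceAlong (M : E →L[ℝ] E) (Φ : E →L[ℝ] E →L[ℝ] F) : F := ∑ i, Φ (M (b i)) (M (b i))

def divAlong (M : E →L[ℝ] E) (Y : E → E) (x : E) : ℝ :=
  ∑ i, ⟪fderiv ℝ Y x (M (b i)), M (b i)⟫_ℝ

def meanCurvature (Q : E → E →L[ℝ] E) (y : E) : E := -b.traceAlong (Q y) (fderiv ℝ Q y)

def tension (P Q : E → E →L[ℝ] E) (y : E) : E :=
  -Q y (b.traceAlong (P y - Q y) (fderiv ℝ Q y))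

variable {b}

theorem divAlong_eq_traceAlong (M : E →L[ℝ] E) (Y : E → E) (x : E) :
    b.divAlong M Y x = b.traceAlong M ((innerSL ℝ : E →L[ℝ] E →L[ℝ] ℝ).comp (fderiv ℝ Y x)) := by
  simp [divAlong, traceAlong]

theorem divAlong_congr {M : E →L[ℝ] E} {Y Z : E → E} {x : E} (h : Y =ᶠ[𝓝 x] Z) :
    b.divAlong M Y x = b.divAlong M Z x := by
  simp only [divAlong, h.fderiv_eq]

theorem divAlong_smul_add {M : E →L[ℝ] E} {Y Z : E → E} {x : E} (hY : DifferentiableAt ℝ Y x)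
    (hZ : DifferentiableAt ℝ Z x) (c : ℝ) :
    b.divAlong M (fun y => c • Y y + Z y) x = c * b.divAlong M Y x + b.divAlong M Z x := by
  unfold divAlong
  rw [fderiv_fun_add (hY.fun_const_smul c) hZ, fderiv_fun_const_smul hY]
  simp [inner_add_left, inner_smul_left, Finset.sum_add_distrib, Finset.mul_sum]

theorem apply_traceAlong_self_eq_zero {Q : E →L[ℝ] E} (hQ : IsIdempotentElem Q)
    {A : E →L[ℝ] E →L[ℝ] E} (hA : ∀ v, A v = A v * Q + Q * A v) :
    Q (b.traceAlong Q A) = 0 := by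
  simp only [traceAlong, map_sum]
  refine Finset.sum_eq_zero fun i _ => ?_
  simpa using congr($(hQ.mul_mul_eq_zero_of_eq_mul_add_mul (hA (Q (b i)))) (b i))

theorem apply_traceAlong_of_mul_eq_zero {Q R : E →L[ℝ] E} {A : E →L[ℝ] E →L[ℝ] E}
    (hA : ∀ v, A v = A v * Q + Q * A v) (hQR : Q * R = 0) :
    Q (b.traceAlong R A) = b.traceAlong R A := by
  simp only [traceAlong, map_sum]
  refine Finset.sum_congr rfl fun i _ => ?_
  simpa using congr($(mul_eq_mul_mul_of_eq_mul_add_mul (hA (R (b i))) hQR) (b i)).symm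

theorem divAlong_clm_apply {Q : E → E →L[ℝ] E} {Y : E → E} {x : E}
    (hQ : DifferentiableAt ℝ Q x) (hY : DifferentiableAt ℝ Y x) (M : E →L[ℝ] E) :
    b.divAlong M (fun y => Q y (Y y)) x =
      ∑ i, ⟪fderiv ℝ Q x (M (b i)) (Y x), M (b i)⟫_ℝ +
        ∑ i, ⟪Q x (fderiv ℝ Y x (M (b i))), M (b i)⟫_ℝ := by
  simp only [divAlong, fderiv_clm_apply hQ hY, add_apply, ContinuousLinearMap.comp_apply,
    ContinuousLinearMap.flip_apply, inner_add_left, Finset.sum_add_distrib, add_comm]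

variable [CompleteSpace E]

theorem _root_.IsSelfAdjoint.inner_apply_left {M : E →L[ℝ] E} (hM : IsSelfAdjoint M)
    (u w : E) : ⟪M u, w⟫_ℝ = ⟪u, M w⟫_ℝ :=
  hM.isSymmetric u w

theorem _root_.IsStarProjection.apply_apply {M : E →L[ℝ] E} (hM : IsStarProjection M) (v : E) :
    M (M v) = M v :=
  DFunLike.congr_fun hM.isIdempotentElem.eq v

theorem _root_.IsStarProjection.mul_sub_eq_zero {M N : E →L[ℝ] E} (hM : IsStarProjection M)
    (hN : IsStarProjection N) (hNM : N * M = M) : M * (N - M) = 0 := by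
  have hMN : M * N = M := by
    simpa [hM.isSelfAdjoint.star_eq, hN.isSelfAdjoint.star_eq] using congr(star $(hNM))
  rw [mul_sub, hMN, hM.isIdempotentElem.eq, sub_self]

variable (b) in
theorem sum_apply_apply_left_eq_right {M : E →L[ℝ] E} (hM : IsSelfAdjoint M)
    (Φ : E →L[ℝ] E →L[ℝ] F) : ∑ i, Φ (M (b i)) (b i) = ∑ i, Φ (b i) (M (b i)) := by
  calc ∑ i, Φ (M (b i)) (b i) = ∑ i, ∑ k, ⟪b k, M (b i)⟫_ℝ • Φ (b k) (b i) := by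
        refine Finset.sum_congr rfl fun i _ => ?_
        conv_lhs => rw [← b.sum_repr' (M (b i))]
        simp only [map_sum, map_smul, sum_apply, smul_apply]
    _ = ∑ k, Φ (b k) (∑ i, ⟪b i, M (b k)⟫_ℝ • b i) := by
        rw [Finset.sum_comm]
        simp only [map_sum, map_smul]
        refine Finset.sum_congr rfl fun k _ => Finset.sum_congr rfl fun i _ => ?_
        rw [real_inner_comm, hM.inner_apply_left]
    _ = ∑ i, Φ (b i) (M (b i)) := by simp only [b.sum_repr']

theorem traceAlong_eq_sum {M : E →L[ℝ] E} (hM : IsStarProjection M) (Φ : E →L[ℝ] E →L[ℝ] F) :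
    b.traceAlong M Φ = ∑ i, Φ (b i) (M (b i)) := by
  have h := b.sum_apply_apply_left_eq_right hM.isSelfAdjoint (Φ.comp M)
  simp only [ContinuousLinearMap.comp_apply, hM.apply_apply] at h
  rw [traceAlong, ← h, b.sum_apply_apply_left_eq_right hM.isSelfAdjoint]

theorem traceAlong_eq_add_sub {M N : E →L[ℝ] E} (hM : IsStarProjection M)
    (hN : IsStarProjection N) (hNM : N * M = M) (Φ : E →L[ℝ] E →L[ℝ] F) :
    b.traceAlong N Φ = b.traceAlong M Φ + b.traceAlong (N - M) Φ := by
  rw [traceAlong_eq_sum hN, traceAlong_eq_sum hM,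
    traceAlong_eq_sum (hM.sub_of_mul_eq_right hN hNM), ← Finset.sum_add_distrib]
  simp

theorem divAlong_eq_add_sub {M N : E →L[ℝ] E} (hM : IsStarProjection M)
    (hN : IsStarProjection N) (hNM : N * M = M) (Y : E → E) (x : E) :
    b.divAlong N Y x = b.divAlong M Y x + b.divAlong (N - M) Y x := by
  simp only [divAlong_eq_traceAlong, traceAlong_eq_add_sub hM hN hNM]

theorem inner_traceAlong_eq_norm_sq {M N : E →L[ℝ] E} (hM : IsStarProjection M)
    (hN : IsStarProjection N) (hNM : N * M = M) {A : E →L[ℝ] E →L[ℝ] E}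
    (hA : ∀ v, A v = A v * M + M * A v) :
    ⟪b.traceAlong N A, b.traceAlong M A⟫_ℝ = ‖b.traceAlong M A‖ ^ 2 := by
  rw [traceAlong_eq_add_sub hM hN hNM, inner_add_left, real_inner_self_eq_norm_sq,
    ← apply_traceAlong_of_mul_eq_zero hA (hM.mul_sub_eq_zero hN hNM),
    hM.isSelfAdjoint.inner_apply_left, apply_traceAlong_self_eq_zero hM.isIdempotentElem hA,
    inner_zero_right, add_zero]

theorem divAlong_apply_const {Q : E → E →L[ℝ] E} {y : E} (hQ : DifferentiableAt ℝ Q y)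
    (hA : ∀ v, IsSelfAdjoint (fderiv ℝ Q y v)) (M : E →L[ℝ] E) (w : E) :
    b.divAlong M (fun z => Q z w) y = ⟪w, b.traceAlong M (fderiv ℝ Q y)⟫_ℝ := by
  simp [divAlong_clm_apply hQ (differentiableAt_const w), traceAlong, inner_sum,
    (hA _).inner_apply_left]

theorem divAlong_self_clm_apply {Q : E → E →L[ℝ] E} {Y : E → E} {x : E}
    (hQ : DifferentiableAt ℝ Q x) (hY : DifferentiableAt ℝ Y x) (hQx : IsStarProjection (Q x))
    (hA : ∀ v, IsSelfAdjoint (fderiv ℝ Q x v)) :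
    b.divAlong (Q x) (fun y => Q y (Y y)) x =
      ⟪Y x, b.traceAlong (Q x) (fderiv ℝ Q x)⟫_ℝ + b.divAlong (Q x) Y x := by
  rw [divAlong_clm_apply hQ hY]
  simp only [traceAlong, divAlong, inner_sum, (hA _).inner_apply_left,
    hQx.isSelfAdjoint.inner_apply_left, hQx.apply_apply]

theorem divAlong_eq_add_inner_of_eventuallyEq {Q : E → E →L[ℝ] E} {V : E → E} {x : E}
    {N : E →L[ℝ] E} (hQ : DifferentiableAt ℝ Q x) (hV : DifferentiableAt ℝ V x)
    (hQx : IsStarProjection (Q x)) (hN : IsStarProjection N) (hNQ : N * Q x = Q x)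
    (hA : ∀ v, IsSelfAdjoint (fderiv ℝ Q x v)) (hVQ : V =ᶠ[𝓝 x] fun y => Q y (V y)) :
    b.divAlong N V x = b.divAlong (Q x) V x + ⟪V x, b.traceAlong (N - Q x) (fderiv ℝ Q x)⟫_ℝ := by
  have hQN (v : E) : Q x ((N - Q x) v) = 0 := by
    rw [← mul_apply_eq_comp, hQx.mul_sub_eq_zero hN hNQ]
    rfl
  rw [divAlong_eq_add_sub hQx hN hNQ, divAlong_congr (M := N - Q x) hVQ, divAlong_clm_apply hQ hV]
  simp only [traceAlong, inner_sum, (hA _).inner_apply_left, hQx.isSelfAdjoint.inner_apply_left,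
    hQN, inner_zero_right, Finset.sum_const_zero, add_zero]

theorem sum_fderiv_inner_eq_divAlong {M : E →L[ℝ] E} (hM : IsStarProjection M) {Y : E → E}
    {x : E} (hY : DifferentiableAt ℝ Y x) :
    ∑ i, fderiv ℝ (fun y => ⟪b i, Y y⟫_ℝ) x (M (b i)) = b.divAlong M Y x := by
  rw [divAlong_eq_traceAlong, traceAlong_eq_sum hM,
    ← b.sum_apply_apply_left_eq_right hM.isSelfAdjoint]
  refine Finset.sum_congr rfl fun i _ => ?_
  rw [fderiv_inner_apply ℝ (differentiableAt_const _) hY]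
  simp [real_inner_comm]

theorem tension_eq {P Q : E → E →L[ℝ] E} {y : E} (hQ : IsStarProjection (Q y))
    (hP : IsStarProjection (P y)) (hPQ : P y * Q y = Q y)
    (hA : ∀ v, fderiv ℝ Q y v = fderiv ℝ Q y v * Q y + Q y * fderiv ℝ Q y v) :
    b.tension P Q y = -Q y (b.traceAlong (P y) (fderiv ℝ Q y)) := by
  rw [tension, traceAlong_eq_add_sub hQ hP hPQ, map_add,
    apply_traceAlong_self_eq_zero hQ.isIdempotentElem hA, zero_add]

theorem lyapunov_integrand_identity {U : Set E} (hU : IsOpen U) {P Q : E → E →L[ℝ] E}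
    (hQ : ContDiffOn ℝ 2 Q U) {x : E} (hP : DifferentiableAt ℝ P x)
    (hQproj : ∀ y ∈ U, IsStarProjection (Q y)) (hPproj : ∀ y ∈ U, IsStarProjection (P y))
    (hPQ : ∀ y ∈ U, P y * Q y = Q y) {V : E → E} (hV : DifferentiableAt ℝ V x)
    (hVQ : ∀ y ∈ U, V y = Q y (V y)) (hx : x ∈ U) :
    b.divAlong (P x) V x +
        1 / 2 * ∑ i, fderiv ℝ (fun y => b.divAlong (P y) (fun z => Q z (b i)) y) x (Q x (b i)) =
      -(1 / 2) * (‖b.meanCurvature Q x‖ ^ 2 -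
        b.divAlong (Q x) (fun y => (2 : ℝ) • V y - b.tension P Q y) x +
          2 * ⟪b.tension P Q x, V x⟫_ℝ) := by
  have hUx : U ∈ 𝓝 x := hU.mem_nhds hx
  have hQd : ∀ y ∈ U, DifferentiableAt ℝ Q y := fun y hy =>
    (hQ.contDiffAt (hU.mem_nhds hy)).differentiableAt (by norm_num)
  have hA : ∀ y ∈ U, ∀ v, fderiv ℝ Q y v = fderiv ℝ Q y v * Q y + Q y * fderiv ℝ Q y v :=
    fun y hy => fderiv_apply_eq_of_isIdempotentElem (hQd y hy)
      (eventually_of_mem (hU.mem_nhds hy) fun z hz => (hQproj z hz).isIdempotentElem)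
  have hAsa : ∀ y ∈ U, ∀ v, IsSelfAdjoint (fderiv ℝ Q y v) :=
    fun y hy => isSelfAdjoint_fderiv_apply (hQd y hy)
      (eventually_of_mem (hU.mem_nhds hy) fun z hz => (hQproj z hz).isSelfAdjoint)
  set W : E → E := fun y => b.traceAlong (P y) (fderiv ℝ Q y)
  have hW : DifferentiableAt ℝ W x := by
    have hDQ : DifferentiableAt ℝ (fderiv ℝ Q) x :=
      ((hQ.fderiv_of_isOpen hU (m := 1) (by norm_num)).differentiableOn (by norm_num) x hx
        ).differentiableAt hUx
    unfold W traceAlong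
    fun_prop
  have hdivX : ∑ i, fderiv ℝ (fun y => b.divAlong (P y) (fun z => Q z (b i)) y) x (Q x (b i)) =
      b.divAlong (Q x) W x := by
    rw [← b.sum_fderiv_inner_eq_divAlong (hQproj x hx) hW]
    refine Finset.sum_congr rfl fun i _ => ?_
    rw [Filter.EventuallyEq.fderiv_eq (eventually_of_mem hUx fun y hy =>
      b.divAlong_apply_const (hQd y hy) (hAsa y hy) _ _)]
  have hdivκ : b.divAlong (Q x) (fun y => (2 : ℝ) • V y - b.tension P Q y) x =
      2 * b.divAlong (Q x) V x +
        (⟪W x, b.traceAlong (Q x) (fderiv ℝ Q x)⟫_ℝ + b.divAlong (Q x) W x) := by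
    rw [b.divAlong_congr (Z := fun y => (2 : ℝ) • V y + Q y (W y)) (eventually_of_mem hUx
      fun y hy => by rw [b.tension_eq (hQproj y hy) (hPproj y hy) (hPQ y hy) (hA y hy),
        sub_neg_eq_add]), b.divAlong_smul_add hV ((hQd x hx).clm_apply hW),
      b.divAlong_self_clm_apply (hQd x hx) hW (hQproj x hx) (hAsa x hx)]
  rw [meanCurvature, norm_neg, b.divAlong_eq_add_inner_of_eventuallyEq (hQd x hx) hV
    (hQproj x hx) (hPproj x hx) (hPQ x hx) (hAsa x hx) (eventually_of_mem hUx hVQ), hdivX, hdivκ,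
    b.inner_traceAlong_eq_norm_sq (hQproj x hx) (hPproj x hx) (hPQ x hx) (hA x hx), tension,
    inner_neg_left, (hQproj x hx).isSelfAdjoint.inner_apply_left, ← hVQ x hx, real_inner_comm]
  ring

end OrthonormalBasis

end

/-- The pointwise identity underlying Theorem 4.5 (the ergodic formula for the sum of the
Lyapunov exponents of the gradient foliated Brownian motion with leafwise drift `V`):
`div V + (1/2) ∑ i Xᵢ(div Xᵢ) = −(1/2)(‖H‖² − div_E(2V − κ) + 2⟪κ, V⟫)`,
where `Xᵢ(y) = Pt y eᵢ` are the projected gradient fields, `div` is the ambient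
divergence (trace over the range of `P`), `div_E` the leafwise divergence (trace over the
range of `Pt`, which plays the role of `P̃`), `H` the mean curvature and `κ` the tension
field of the leaves. -/
theorem lyapunov_integrand_identity {N : ℕ}
    (U : Set (EuclideanSpace ℝ (Fin N))) (hU : IsOpen U)
    (P Pt : EuclideanSpace ℝ (Fin N) → (EuclideanSpace ℝ (Fin N) →L[ℝ] EuclideanSpace ℝ (Fin N)))
    (hPreg : ContDiffOn ℝ 2 P U) (hPtreg : ContDiffOn ℝ 2 Pt U)
    (hPsa : ∀ y ∈ U, ∀ v w : EuclideanSpace ℝ (Fin N), ⟪P y v, w⟫_ℝ = ⟪v, P y w⟫_ℝ)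
    (hPidem : ∀ y ∈ U, ∀ v : EuclideanSpace ℝ (Fin N), P y (P y v) = P y v)
    (hPtsa : ∀ y ∈ U, ∀ v w : EuclideanSpace ℝ (Fin N), ⟪Pt y v, w⟫_ℝ = ⟪v, Pt y w⟫_ℝ)
    (hPtidem : ∀ y ∈ U, ∀ v : EuclideanSpace ℝ (Fin N), Pt y (Pt y v) = Pt y v)
    (hcomp : ∀ y ∈ U, (P y).comp (Pt y) = Pt y ∧ (Pt y).comp (P y) = Pt y)
    (V : EuclideanSpace ℝ (Fin N) → EuclideanSpace ℝ (Fin N))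
    (hVreg : ContDiffOn ℝ 1 V U)
    (hVleaf : ∀ y ∈ U, V y = Pt y (V y))
    (X : Fin N → EuclideanSpace ℝ (Fin N) → EuclideanSpace ℝ (Fin N))
    (hX : ∀ i y, X i y = Pt y (EuclideanSpace.single i (1 : ℝ)))
    (divX : Fin N → EuclideanSpace ℝ (Fin N) → ℝ)
    (hdivX : ∀ i y, divX i y = ∑ j : Fin N,
        ⟪(fderiv ℝ (X i) y) (P y (EuclideanSpace.single j (1 : ℝ))),
          P y (EuclideanSpace.single j (1 : ℝ))⟫_ℝ)
    (H : EuclideanSpace ℝ (Fin N) → EuclideanSpace ℝ (Fin N))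
    (hH : ∀ y, H y = -∑ j : Fin N,
        (fderiv ℝ Pt y (Pt y (EuclideanSpace.single j (1 : ℝ))))
          (Pt y (EuclideanSpace.single j (1 : ℝ))))
    (κ : EuclideanSpace ℝ (Fin N) → EuclideanSpace ℝ (Fin N))
    (hκ : ∀ y, κ y = -(Pt y (∑ i : Fin N,
        (fderiv ℝ Pt y ((P y - Pt y) (EuclideanSpace.single i (1 : ℝ))))
          ((P y - Pt y) (EuclideanSpace.single i (1 : ℝ))))))
    (x : EuclideanSpace ℝ (Fin N)) (hx : x ∈ U) :
    (∑ j : Fin N, ⟪(fderiv ℝ V x) (P x (EuclideanSpace.single j (1 : ℝ))),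
        P x (EuclideanSpace.single j (1 : ℝ))⟫_ℝ)
      + (1 / 2) * ∑ i : Fin N, (fderiv ℝ (divX i) x) (X i x)
      = -(1 / 2) * (‖H x‖ ^ 2
          - (∑ j : Fin N,
              ⟪(fderiv ℝ (fun y => (2 : ℝ) • V y - κ y) x)
                  (Pt x (EuclideanSpace.single j (1 : ℝ))),
                Pt x (EuclideanSpace.single j (1 : ℝ))⟫_ℝ)
          + 2 * ⟪κ x, V x⟫_ℝ) := by
  set b := EuclideanSpace.basisFun (Fin N) ℝ
  have he (j : Fin N) : EuclideanSpace.single j (1 : ℝ) = b j :=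
    (EuclideanSpace.basisFun_apply _ _ j).symm
  have hproj {M : EuclideanSpace ℝ (Fin N) →L[ℝ] EuclideanSpace ℝ (Fin N)}
      (hsa : ∀ v w, ⟪M v, w⟫_ℝ = ⟪v, M w⟫_ℝ) (hidem : ∀ v, M (M v) = M v) :
      IsStarProjection M :=
    ⟨ContinuousLinearMap.ext hidem, ContinuousLinearMap.isSelfAdjoint_iff_isSymmetric.mpr hsa⟩
  obtain rfl : X = fun i y => Pt y (b i) := by
    funext i y; rw [hX, he]
  obtain rfl : divX = fun i y => b.divAlong (P y) (fun z => Pt z (b i)) y := by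
    funext i y; simp only [hdivX, he]; rfl
  obtain rfl : H = b.meanCurvature Pt := by
    funext y; simp only [hH, he]; rfl
  obtain rfl : κ = b.tension P Pt := by
    funext y; simp only [hκ, he]; rfl
  simp only [he]
  exact b.lyapunov_integrand_identity hU hPtreg
    ((hPreg.differentiableOn (by norm_num) x hx).differentiableAt (hU.mem_nhds hx))
    (fun y hy => hproj (hPtsa y hy) (hPtidem y hy)) (fun y hy => hproj (hPsa y hy) (hPidem y hy))
    (fun y hy => (hcomp y hy).1)
    ((hVreg.differentiableOn one_ne_zero x hx).differentiableAt (hU.mem_nhds hx)) hVleaf hx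
end
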